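/- arXiv:2304.05458 — 5 statements merged into one kernel-verified Lean document; each statement's English description precedes it below -/
import Mathlib

section
/- Let L_1, ..., L_m be pairwise commensurable grids in R^d. Then there exist a lattice L of covolume one in R^d, a positive integer r, positive real numbers c_1, ..., c_r, and vectors v_1, ..., v_r ∈ R^d such that L_1 ∪ ... ∪ L_m = ⋃_{i=1}^r c_i(L + v_i). Moreover one can choose this representation so that for all i ≠ i' in {1,…,r}, if c_i/c_{i'} ∈ Q then c_i(L + v_i) ∩ c_{i'}(L + v_{i'}) = ∅. -/
/-!
Everything is compared with one base grid `L_0 = w_0 + Λ_0`. For each `j`, the grid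
`L_0 ∩ (δ L_j + v)` is a coset of a lattice `G ⊆ Λ_0 ∩ δ Λ_j`; since `G` has finite index
in `Λ_0`, some `t_j Λ_0 ⊆ Λ_j` with `t_j > 0`. Multiplying each `t_j` by a positive integer
makes rationally related factors equal and keeps these inclusions. Writing `Λ_0 = γ U` with `U`
unimodular, each `L_j` is a finite union of cosets of `c_j U ⊆ Λ_j`, and two such cosets with
rationally related factors are cosets of one lattice, hence equal or disjoint.
-/

/-- A full-rank lattice in ℝ^d: the ℤ-span of an ℝ-basis of ℝ^d. -/
def IsLattice {d : ℕ} (Λ : Set (Fin d → ℝ)) : Prop :=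
  ∃ b : Module.Basis (Fin d) ℝ (Fin d → ℝ),
    Λ = (Submodule.span ℤ (Set.range ⇑b) : Set (Fin d → ℝ))

/-- A full-rank lattice of covolume one in ℝ^d. -/
def IsUnimodularLattice {d : ℕ} (Λ : Set (Fin d → ℝ)) : Prop :=
  ∃ b : Module.Basis (Fin d) ℝ (Fin d → ℝ),
    |(Matrix.of fun i j => b i j).det| = 1 ∧
    Λ = (Submodule.span ℤ (Set.range ⇑b) : Set (Fin d → ℝ))

/-- A grid in ℝ^d: a translate of a full-rank lattice. -/
def IsGrid {d : ℕ} (L : Set (Fin d → ℝ)) : Prop :=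
  ∃ (v : Fin d → ℝ) (Λ : Set (Fin d → ℝ)), IsLattice Λ ∧ L = (fun x => v + x) '' Λ

/-- Two grids `L`, `L'` are commensurable if there exist `δ > 0` and `v` such that
`L ∩ (δ L' + v)` is a grid. -/
def GridCommensurable {d : ℕ} (L L' : Set (Fin d → ℝ)) : Prop :=
  ∃ δ : ℝ, 0 < δ ∧ ∃ v : Fin d → ℝ, IsGrid (L ∩ ((fun x => δ • x + v) '' L'))

open Set
open scoped Pointwise

theorem Set.image_smul_add_vadd {α E : Type*} [Monoid α] [AddCommMonoid E] [DistribMulAction α E]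
    (a : α) (v w : E) (S : Set E) :
    (fun x => a • x + v) '' (w +ᵥ S) = (a • w + v) +ᵥ a • S := by
  rw [← image_vadd, ← image_smul, ← image_vadd, image_image, image_image]
  congr 1
  funext x
  simp only [vadd_eq_add, smul_add]
  abel

theorem Set.vadd_smul_set_eq_image {K E : Type*} [DivisionRing K] [AddCommGroup E] [Module K E]
    {c : K} (hc : c ≠ 0) (x : E) (U : Set E) :
    x +ᵥ c • U = (fun y => c • (y + c⁻¹ • x)) '' U := by
  rw [← image_smul, ← image_vadd, image_image]
  congr 1
  funext y
  rw [smul_add, smul_inv_smul₀ hc, vadd_eq_add, add_comm]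

theorem Submodule.natCast_smul_le {E : Type*} [AddCommGroup E] [Module ℝ E] (S : Submodule ℤ E)
    (k : ℕ) : (k : ℝ) • S ≤ S := by
  rintro _ ⟨x, hx, rfl⟩
  show (k : ℝ) • x ∈ S
  rw [Nat.cast_smul_eq_nsmul]
  exact S.nsmul_mem hx k

namespace AddSubgroup

variable {E : Type*} [AddGroup E] {G H : AddSubgroup E}

theorem le_of_vadd_subset_vadd {u w : E} (h : u +ᵥ (G : Set E) ⊆ w +ᵥ (H : Set E)) :
    G ≤ H := by
  intro g hg
  obtain ⟨h₀, hh₀, e₀⟩ := h (vadd_mem_vadd_set (a := u) G.zero_mem)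
  obtain ⟨h₁, hh₁, e₁⟩ := h (vadd_mem_vadd_set (a := u) hg)
  have : g = -h₀ + h₁ := by
    simp only [vadd_eq_add, add_zero] at e₀ e₁
    rw [← e₀, add_assoc] at e₁
    exact eq_neg_add_iff_add_eq.2 (add_left_cancel e₁).symm
  exact this ▸ H.add_mem (H.neg_mem hh₀) hh₁

theorem vadd_coset_eq_or_disjoint (G : AddSubgroup E) (x y : E) :
    x +ᵥ (G : Set E) = y +ᵥ (G : Set E) ∨
      Disjoint (x +ᵥ (G : Set E)) (y +ᵥ (G : Set E)) := by
  refine or_iff_not_imp_right.2 fun hxy => ?_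
  obtain ⟨_, ⟨g, hg, rfl⟩, ⟨g', hg', hgg'⟩⟩ := not_disjoint_iff.1 hxy
  rw [leftAddCoset_eq_iff]
  have : -x + y = g + -g' := by
    simp only [vadd_eq_add] at hgg'
    rw [neg_add_eq_iff_eq_add, ← add_assoc, ← hgg', add_neg_cancel_right]
  exact this ▸ G.add_mem hg (G.neg_mem hg')

theorem biUnion_vadd_coset (hGH : G ≤ H) (w : E) :
    ⋃ x ∈ w +ᵥ (H : Set E), x +ᵥ (G : Set E) = w +ᵥ (H : Set E) := by
  refine subset_antisymm (iUnion₂_subset ?_) fun x hx =>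
    mem_biUnion hx ⟨0, G.zero_mem, add_zero x⟩
  rintro _ ⟨h, hh, rfl⟩ _ ⟨g, hg, rfl⟩
  exact ⟨h + g, H.add_mem hh (hGH hg), (add_assoc w h g).symm⟩

theorem finite_image_vadd_coset (h : G.relIndex H ≠ 0) (w : E) :
    ((· +ᵥ (G : Set E)) '' (w +ᵥ (H : Set E))).Finite := by
  have : Finite (H ⧸ G.addSubgroupOf H) := (fintypeOfIndexNeZero h).finite
  refine (finite_range fun q : H ⧸ G.addSubgroupOf H => (w + q.out) +ᵥ (G : Set E)).subset ?_
  rintro _ ⟨_, ⟨x, hx, rfl⟩, rfl⟩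
  refine ⟨(⟨x, hx⟩ : H), (leftAddCoset_eq_iff G).2 ?_⟩
  have hq := QuotientAddGroup.eq.1 <|
    Quotient.out_eq (QuotientAddGroup.mk (s := G.addSubgroupOf H) ⟨x, hx⟩)
  simpa [mem_addSubgroupOf, neg_add_rev, add_assoc] using hq

end AddSubgroup

theorem exists_nat_common_multiple_of_pos {ι : Type*} [Fintype ι] (q : ι → ℚ)
    (hq : ∀ i, 0 < q i) :
    ∃ D : ℕ, ∀ i, ∃ k : ℕ, 0 < k ∧ (k : ℚ) * q i = D := by
  classical
  refine ⟨∏ i, (q i).num.natAbs, fun i =>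
    ⟨(∏ j ∈ Finset.univ.erase i, (q j).num.natAbs) * (q i).den,
      Nat.mul_pos (Finset.prod_pos fun j _ => Int.natAbs_pos.2 (Rat.num_ne_zero.2 (hq j).ne'))
        (q i).den_pos, ?_⟩⟩
  rw [← Finset.mul_prod_erase _ _ (Finset.mem_univ i)]
  have hnum : ((q i).num.natAbs : ℚ) = (q i).num := by
    rw [Nat.cast_natAbs, abs_of_pos (Rat.num_pos.2 (hq i))]
  push_cast
  rw [hnum, mul_assoc, Rat.den_mul_eq_num, mul_comm]

theorem exists_nat_mul_eq_of_div_eq_rat {ι : Type*} [Finite ι] (t : ι → ℝ)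
    (ht : ∀ i, 0 < t i) :
    ∃ k : ι → ℕ, (∀ i, 0 < k i) ∧
      ∀ i j, (∃ q : ℚ, k i * t i / (k j * t j) = q) → k i * t i = k j * t j := by
  have := Fintype.ofFinite ι
  let ratRatio : Setoid ι :=
    { r := fun i j => ∃ q : ℚ, t i / t j = q
      iseqv := ⟨fun i => ⟨1, by simp [(ht i).ne']⟩,
        fun ⟨q, hq⟩ => ⟨q⁻¹, by rw [Rat.cast_inv, ← hq, inv_div]⟩,
        fun ⟨q, hq⟩ ⟨q', hq'⟩ => ⟨q * q', by
          rw [Rat.cast_mul, ← hq, ← hq', div_mul_div_cancel₀ (ht _).ne']⟩⟩ }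
  let rep : ι → ι := fun i => (Quotient.mk ratRatio i).out
  have hrep : ∀ i, ratRatio.r i (rep i) := fun i => Quotient.exact (Quotient.out_eq _).symm
  choose q hq using hrep
  have hqpos : ∀ i, 0 < q i := fun i => by
    have := div_pos (ht i) (ht (rep i)); rw [hq i] at this; exact_mod_cast this
  obtain ⟨D, hD⟩ := exists_nat_common_multiple_of_pos q hqpos
  choose k hk hkq using hD
  have hkt : ∀ i, k i * t i = D * t (rep i) := fun i => by
    rw [← div_mul_cancel₀ (t i) (ht (rep i)).ne', hq i, ← mul_assoc, ← Rat.cast_natCast,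
      ← Rat.cast_mul, hkq, Rat.cast_natCast]
  refine ⟨k, hk, fun i j ⟨r, hr⟩ => ?_⟩
  have hD : (D : ℝ) ≠ 0 := by
    have : (0 : ℚ) < D := hkq i ▸ mul_pos (Nat.cast_pos.2 (hk i)) (hqpos i)
    exact_mod_cast this.ne'
  have hij : Quotient.mk ratRatio i = Quotient.mk ratRatio j := by
    rw [← Quotient.out_eq (Quotient.mk ratRatio i), ← Quotient.out_eq (Quotient.mk ratRatio j)]
    exact Quotient.sound ⟨r, by rw [← hr, hkt, hkt, mul_div_mul_left _ _ hD]⟩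
  rw [hkt, hkt]
  exact congrArg (fun a => (D : ℝ) * t (Quotient.out a)) hij

section Lattice

variable {d : ℕ}

theorem IsLattice.exists_basis_eq_span {Λ : Submodule ℤ (Fin d → ℝ)}
    (h : IsLattice (Λ : Set (Fin d → ℝ))) :
    ∃ b : Module.Basis (Fin d) ℝ (Fin d → ℝ), Λ = Submodule.span ℤ (range b) :=
  h.imp fun _ hb => SetLike.coe_injective hb

theorem IsUnimodularLattice.isLattice {Λ : Set (Fin d → ℝ)} (h : IsUnimodularLattice Λ) :
    IsLattice Λ :=
  h.imp fun _ => And.right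

theorem IsGrid.exists_eq_vadd {L : Set (Fin d → ℝ)} (h : IsGrid L) :
    ∃ (w : Fin d → ℝ) (Λ : Submodule ℤ (Fin d → ℝ)),
      IsLattice (Λ : Set (Fin d → ℝ)) ∧ L = w +ᵥ (Λ : Set (Fin d → ℝ)) := by
  obtain ⟨w, _, ⟨b, rfl⟩, rfl⟩ := h
  exact ⟨w, Submodule.span ℤ (range b), ⟨b, rfl⟩,
    image_vadd (α := Fin d → ℝ) (β := Fin d → ℝ)⟩

theorem IsLattice.smul {Λ : Submodule ℤ (Fin d → ℝ)} (h : IsLattice (Λ : Set (Fin d → ℝ)))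
    {t : ℝ} (ht : t ≠ 0) :
    IsLattice ((t • Λ : Submodule ℤ (Fin d → ℝ)) : Set (Fin d → ℝ)) := by
  obtain ⟨b, rfl⟩ := h.exists_basis_eq_span
  exact ⟨_, by rw [ZSpan.smul b ht]⟩

theorem IsLattice.relIndex_ne_zero {Λ Λ' : Submodule ℤ (Fin d → ℝ)}
    (hΛ : IsLattice (Λ : Set (Fin d → ℝ))) (hΛ' : IsLattice (Λ' : Set (Fin d → ℝ)))
    (h : Λ' ≤ Λ) :
    Λ'.toAddSubgroup.relIndex Λ.toAddSubgroup ≠ 0 := by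
  obtain ⟨b, rfl⟩ := hΛ.exists_basis_eq_span
  obtain ⟨b', rfl⟩ := hΛ'.exists_basis_eq_span
  rw [← Nat.cast_ne_zero (R := ℝ), ← ZLattice.covolume_div_covolume_eq_relIndex _ _ h]
  exact (div_pos (ZLattice.covolume_pos _ MeasureTheory.volume)
    (ZLattice.covolume_pos _ MeasureTheory.volume)).ne'

theorem IsLattice.exists_eq_smul_isUnimodularLattice {Λ : Submodule ℤ (Fin d → ℝ)}
    (h : IsLattice (Λ : Set (Fin d → ℝ))) :
    ∃ γ : ℝ, 0 < γ ∧ ∃ U : Submodule ℤ (Fin d → ℝ),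
      IsUnimodularLattice (U : Set (Fin d → ℝ)) ∧ Λ = γ • U := by
  obtain ⟨b, rfl⟩ := h.exists_basis_eq_span
  set D := |(Matrix.of fun i j => b i j).det|
  have hD : 0 < D := by
    have := (Pi.basisFun ℝ (Fin d)).isUnit_det b
    rw [Pi.basisFun_det_apply] at this
    exact abs_pos.2 this.ne_zero
  obtain ⟨γ, hγ, hγD⟩ : ∃ γ : ℝ, 0 < γ ∧ γ ^ d = D := by
    rcases eq_or_ne d 0 with rfl | hd
    · exact ⟨1, one_pos, by simp [D]⟩
    · exact ⟨D ^ (d⁻¹ : ℝ), by positivity, Real.rpow_inv_natCast_pow hD.le hd⟩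
  have hγ' : γ⁻¹ ≠ 0 := inv_ne_zero hγ.ne'
  refine ⟨γ, hγ, Submodule.span ℤ (range (b.isUnitSMul fun _ => hγ'.isUnit)), ⟨_, ?_, rfl⟩, ?_⟩
  · have : (Matrix.of fun i j => b.isUnitSMul (fun _ => hγ'.isUnit) i j)
        = γ⁻¹ • Matrix.of fun i j => b i j := by
      ext; simp [Module.Basis.isUnitSMul_apply]
    rw [this, Matrix.det_smul, abs_mul, Fintype.card_fin, abs_pow, abs_inv, abs_of_pos hγ,
      inv_pow, hγD, inv_mul_cancel₀ hD.ne']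
  · rw [ZSpan.smul _ hγ.ne']
    congr 2
    ext i
    simp [Module.Basis.isUnitSMul_apply, hγ.ne']

theorem exists_smul_le_of_gridCommensurable {w w' : Fin d → ℝ}
    {Λ Λ' : Submodule ℤ (Fin d → ℝ)} (hΛ : IsLattice (Λ : Set (Fin d → ℝ)))
    (h : GridCommensurable (w +ᵥ (Λ : Set (Fin d → ℝ))) (w' +ᵥ (Λ' : Set (Fin d → ℝ)))) :
    ∃ t : ℝ, 0 < t ∧ t • Λ ≤ Λ' := by
  obtain ⟨δ, hδ, v, hG⟩ := h
  obtain ⟨u, G, hGlat, hGeq⟩ := hG.exists_eq_vadd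
  rw [image_smul_add_vadd, ← Submodule.coe_pointwise_smul] at hGeq
  have hGΛ : G ≤ Λ :=
    AddSubgroup.le_of_vadd_subset_vadd (G := G.toAddSubgroup) (H := Λ.toAddSubgroup)
      (hGeq ▸ inter_subset_left)
  have hGδΛ' : G ≤ δ • Λ' :=
    AddSubgroup.le_of_vadd_subset_vadd (G := G.toAddSubgroup) (H := (δ • Λ').toAddSubgroup)
      (hGeq ▸ inter_subset_right)
  have hn := hΛ.relIndex_ne_zero hGlat hGΛ
  -- `n Λ ⊆ G ⊆ δ Λ'`, where `n` is the index of `G` in `Λ`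
  refine ⟨G.toAddSubgroup.relIndex Λ.toAddSubgroup / δ,
    div_pos (Nat.cast_pos.2 (Nat.pos_of_ne_zero hn)) hδ, ?_⟩
  rintro _ ⟨x, hx, rfl⟩
  obtain ⟨y, hy, hxy⟩ := (Submodule.mem_smul_pointwise_iff_exists _ _ _).1
    (hGδΛ' (AddSubgroup.nsmul_relIndex_mem G.toAddSubgroup (K := Λ.toAddSubgroup) hx))
  convert hy using 1
  show (_ : ℝ) • x = y
  rw [← inv_smul_smul₀ hδ.ne' y, hxy, div_eq_inv_mul, mul_smul, Nat.cast_smul_eq_nsmul]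

end Lattice

section CosetPieces

variable {ι E : Type*} [AddCommGroup E] [Module ℝ E]

-- Pairing each coset with its factor `c j` makes the factor a function of the piece.
def cosetPieces (w : ι → E) (Λ : ι → Submodule ℤ E) (c : ι → ℝ) (U : Submodule ℤ E) :
    Set (ℝ × Set E) :=
  ⋃ j, (fun x => (c j, x +ᵥ c j • (U : Set E))) '' (w j +ᵥ (Λ j : Set E))

variable {w : ι → E} {Λ : ι → Submodule ℤ E} {c : ι → ℝ} {U : Submodule ℤ E}

theorem mem_cosetPieces {p : ℝ × Set E} :
    p ∈ cosetPieces w Λ c U ↔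
      ∃ j, ∃ x ∈ w j +ᵥ (Λ j : Set E), (c j, x +ᵥ c j • (U : Set E)) = p := by
  simp only [cosetPieces, mem_iUnion, mem_image]

theorem cosetPieces_nonempty [Nonempty ι] : (cosetPieces w Λ c U).Nonempty :=
  let j := Classical.arbitrary ι
  ⟨_, mem_cosetPieces.2 ⟨j, _, vadd_mem_vadd_set (Λ j).zero_mem, rfl⟩⟩

theorem biUnion_cosetPieces (hle : ∀ j, c j • U ≤ Λ j) :
    ⋃ p ∈ cosetPieces w Λ c U, p.2 = ⋃ j, w j +ᵥ (Λ j : Set E) := by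
  simp only [cosetPieces, biUnion_iUnion, biUnion_image]
  exact iUnion_congr fun j => AddSubgroup.biUnion_vadd_coset (G := (c j • U).toAddSubgroup)
    (H := (Λ j).toAddSubgroup) (hle j) (w j)

theorem cosetPieces_pairwise (hc : ∀ i j, (∃ q : ℚ, c i / c j = q) → c i = c j) :
    (cosetPieces w Λ c U).Pairwise fun p p' =>
      (∃ q : ℚ, p.1 / p'.1 = q) → Disjoint p.2 p'.2 := by
  rintro _ hp _ hp' hne hq
  obtain ⟨i, x, -, rfl⟩ := mem_cosetPieces.1 hp
  obtain ⟨j, y, -, rfl⟩ := mem_cosetPieces.1 hp'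
  have hij := hc i j hq
  simp only [hij] at hne ⊢
  exact ((c j • U).toAddSubgroup.vadd_coset_eq_or_disjoint x y).resolve_left
    fun h => hne (Prod.ext rfl h)

theorem cosetPieces_finite {d : ℕ} [Finite ι] {w : ι → Fin d → ℝ}
    {Λ : ι → Submodule ℤ (Fin d → ℝ)} {U : Submodule ℤ (Fin d → ℝ)}
    (hU : IsLattice (U : Set (Fin d → ℝ))) (hΛ : ∀ j, IsLattice (Λ j : Set (Fin d → ℝ)))
    (hc : ∀ j, c j ≠ 0) (hle : ∀ j, c j • U ≤ Λ j) :
    (cosetPieces w Λ c U).Finite := by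
  refine finite_iUnion fun j => ?_
  rw [← image_image (fun P => (c j, P)) (· +ᵥ c j • (U : Set (Fin d → ℝ)))]
  exact (AddSubgroup.finite_image_vadd_coset
    ((hΛ j).relIndex_ne_zero (hU.smul (hc j)) (hle j)) (w j)).image _

end CosetPieces

theorem exists_fin_smul_vadd_cover_of_finite {E : Type*} [AddCommGroup E] [Module ℝ E]
    (U : Set E) {P : Set (ℝ × Set E)} (hfin : P.Finite) (hne : P.Nonempty)
    (hpos : ∀ p ∈ P, 0 < p.1) (hform : ∀ p ∈ P, ∃ x : E, p.2 = x +ᵥ p.1 • U)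
    (hdisj : P.Pairwise fun p p' => (∃ q : ℚ, p.1 / p'.1 = q) → Disjoint p.2 p'.2) :
    ∃ r : ℕ, 0 < r ∧ ∃ (c : Fin r → ℝ) (v : Fin r → E), (∀ i, 0 < c i) ∧
      ⋃ p ∈ P, p.2 = ⋃ i, (fun x => c i • (x + v i)) '' U ∧
      ∀ i i' : Fin r, i ≠ i' → (∃ q : ℚ, c i / c i' = q) →
        Disjoint ((fun x => c i • (x + v i)) '' U) ((fun x => c i' • (x + v i')) '' U) := by
  obtain ⟨r, p, hinj, hrange⟩ := hfin.fin_param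
  have hp : ∀ i, p i ∈ P := fun i => hrange ▸ mem_range_self i
  choose x hx using fun i => hform _ (hp i)
  have hpiece : ∀ i, (fun y => (p i).1 • (y + (p i).1⁻¹ • x i)) '' U = (p i).2 := by
    intro i
    rw [hx i, vadd_smul_set_eq_image (hpos _ (hp i)).ne']
  obtain ⟨_, i₀, -⟩ := hrange ▸ hne
  refine ⟨r, i₀.pos, fun i => (p i).1, fun i => (p i).1⁻¹ • x i, fun i => hpos _ (hp i),
    ?_, fun i i' hii' hq => ?_⟩
  · simp only [hpiece]
    rw [← hrange, biUnion_range]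
  · rw [hpiece, hpiece]
    exact hdisj (hp i) (hp i') (hinj.ne hii') hq

/-- Lemma: a finite family of pairwise commensurable grids can be written as a finite
union of dilated translates `c_i (L + v_i)` of a single covolume-one lattice `L`, and
moreover so that grids with rationally related dilation factors are disjoint. -/
theorem union_of_commensurable_grids (d m : ℕ) (hm : 1 ≤ m)
    (L : Fin m → Set (Fin d → ℝ))
    (hgrid : ∀ i, IsGrid (L i))
    (hcomm : ∀ i j, GridCommensurable (L i) (L j)) :
    ∃ Λ : Set (Fin d → ℝ), IsUnimodularLattice Λ ∧
      ∃ r : ℕ, 0 < r ∧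
        ∃ (c : Fin r → ℝ) (v : Fin r → (Fin d → ℝ)),
          (∀ i, 0 < c i) ∧
          (⋃ i, L i) = ⋃ i, (fun x => c i • (x + v i)) '' Λ ∧
          (∀ i i' : Fin r, i ≠ i' → (∃ q : ℚ, c i / c i' = (q : ℝ)) →
            Disjoint ((fun x => c i • (x + v i)) '' Λ)
              ((fun x => c i' • (x + v i')) '' Λ)) := by
  choose w Λ hΛ hL using fun i => (hgrid i).exists_eq_vadd
  obtain rfl : L = fun i => w i +ᵥ (Λ i : Set (Fin d → ℝ)) := funext hL
  have : NeZero m := ⟨Nat.one_le_iff_ne_zero.1 hm⟩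
  obtain ⟨γ, hγ, U, hU, hΛz⟩ := (hΛ 0).exists_eq_smul_isUnimodularLattice
  choose t ht htΛ using fun j => exists_smul_le_of_gridCommensurable (hΛ 0) (hcomm 0 j)
  obtain ⟨k, hk, hrat⟩ := exists_nat_mul_eq_of_div_eq_rat (fun j => t j * γ)
    fun j => mul_pos (ht j) hγ
  set c : Fin m → ℝ := fun j => k j * (t j * γ)
  have hc : ∀ j, 0 < c j := fun j => mul_pos (Nat.cast_pos.2 (hk j)) (mul_pos (ht j) hγ)
  have hle : ∀ j, c j • U ≤ Λ j := fun j => calc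
    c j • U = (k j : ℝ) • t j • Λ 0 := by rw [hΛz, smul_smul, smul_smul, mul_assoc]
    _ ≤ t j • Λ 0 := (t j • Λ 0).natCast_smul_le (k j)
    _ ≤ Λ j := htΛ j
  obtain ⟨r, hr, c', v, hc', hunion, hdisj⟩ := exists_fin_smul_vadd_cover_of_finite (U : Set _)
    (cosetPieces_finite hU.isLattice hΛ (fun j => (hc j).ne') hle)
    cosetPieces_nonempty
    (fun _ hp => by obtain ⟨j, -, -, rfl⟩ := mem_cosetPieces.1 hp; exact hc j)
    (fun _ hp => by obtain ⟨-, x, -, rfl⟩ := mem_cosetPieces.1 hp; exact ⟨x, rfl⟩)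
    (cosetPieces_pairwise hrat)
  exact ⟨U, hU, r, hr, c', v, hc', (biUnion_cosetPieces hle).symm.trans hunion, hdisj⟩
end

section
/- Let L and L' be grids in R^d. If L ∩ L' is not contained in any affine hyperplane of R^d, then L and L' are commensurable. -/
/-!
Once a common point `q` of `L = v + Λ` and `L' = v' + Λ'` is found, `L ∩ L' = q + (Λ ∩ Λ')`.
The group `Λ ∩ Λ'` is discrete, being a subgroup of `Λ`, and the hyperplane condition says
precisely that it spans `ℝ^d`; so it is a full-rank lattice and `L ∩ L'` is itself a grid,
which is commensurability with `δ = 1` and `v = 0`.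
-/

open Submodule Module

section Hyperplane

variable {ι : Type*} [Fintype ι]

lemma exists_subset_hyperplane_of_span_ne_top {N : Set (ι → ℝ)} (q : ι → ℝ)
    (hN : span ℝ N ≠ ⊤) :
    ∃ (n : ι → ℝ) (c : ℝ), n ≠ 0 ∧ (fun x => q + x) '' N ⊆ {x | ∑ i, x i * n i = c} := by
  classical
  obtain ⟨f, hf, hfN⟩ := exists_dual_map_eq_bot_of_lt_top hN.lt_top inferInstance
  have hf_apply (x : ι → ℝ) : f x = ∑ i, x i * f fun j => if i = j then 1 else 0 := by
    simp only [f.pi_apply_eq_sum_univ x, smul_eq_mul]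
  refine ⟨fun i => f fun j => if i = j then 1 else 0, f q, fun hn => hf ?_, ?_⟩
  · refine LinearMap.ext fun x => ?_
    simp [hf_apply x, congrFun hn]
  · rintro _ ⟨y, hy, rfl⟩
    have hfy : f y = 0 := by
      simpa [hfN] using mem_map_of_mem (f := f) (subset_span hy)
    simp only [Set.mem_ofPred_eq, ← hf_apply, map_add, hfy, add_zero]

lemma nonempty_of_not_subset_hyperplane [Nonempty ι] {S : Set (ι → ℝ)}
    (h : ¬∃ (n : ι → ℝ) (c : ℝ), n ≠ 0 ∧ S ⊆ {x | ∑ i, x i * n i = c}) :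
    S.Nonempty := by
  classical
  obtain ⟨i⟩ := ‹Nonempty ι›
  rw [Set.nonempty_iff_ne_empty]
  rintro rfl
  exact h ⟨Pi.single i 1, 0, by simp, Set.empty_subset _⟩

end Hyperplane

lemma image_add_eq_of_mem {G S : Type*} [AddCommGroup G] [SetLike S G] [AddSubgroupClass S G]
    {H : S} {v q : G} (hq : q ∈ (fun x => v + x) '' (H : Set G)) :
    (fun x => v + x) '' (H : Set G) = (fun x => q + x) '' (H : Set G) := by
  obtain ⟨h₀, hh₀, rfl⟩ := hq
  rw [Set.image_add_left, Set.image_add_left]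
  ext x
  simp only [Set.mem_preimage, SetLike.mem_coe, neg_add_rev, add_assoc,
    add_mem_cancel_left (neg_mem hh₀)]

lemma isLattice_of_span_eq_top {d : ℕ} (N : Submodule ℤ (Fin d → ℝ)) [DiscreteTopology N]
    (hN : span ℝ (N : Set (Fin d → ℝ)) = ⊤) : IsLattice (N : Set (Fin d → ℝ)) := by
  have : IsZLattice ℝ N := ⟨hN⟩
  have hrank : finrank ℤ N = d := by rw [ZLattice.rank ℝ N, finrank_fin_fun]
  let b := finBasisOfFinrankEq ℤ N hrank
  exact ⟨b.ofZLatticeBasis ℝ N, by rw [b.ofZLatticeBasis_span ℝ N]⟩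

/-- If the intersection of two grids is not contained in any affine hyperplane, then
the grids are commensurable. -/
theorem commensurable_of_not_subset_hyperplane (d : ℕ) (L L' : Set (Fin d → ℝ))
    (hL : IsGrid L) (hL' : IsGrid L')
    (h : ¬ ∃ (n : Fin d → ℝ) (c : ℝ), n ≠ 0 ∧
        L ∩ L' ⊆ {x : Fin d → ℝ | (∑ i, x i * n i) = c}) :
    GridCommensurable L L' := by
  obtain ⟨v, _, ⟨b, rfl⟩, hLv⟩ := hL
  obtain ⟨v', _, ⟨b', rfl⟩, hL'v⟩ := hL'
  set Λ := span ℤ (Set.range b)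
  set Λ' := span ℤ (Set.range b')
  set N : Submodule ℤ (Fin d → ℝ) := Λ ⊓ Λ'
  obtain ⟨q, hqL, hqL'⟩ : (L ∩ L').Nonempty := by
    cases isEmpty_or_nonempty (Fin d)
    -- for `d = 0` the hyperplane condition is vacuous, but both grids are the one-point space
    · rw [hLv, hL'v]
      exact ⟨v, ⟨0, zero_mem _, add_zero v⟩, ⟨0, zero_mem _, Subsingleton.elim _ _⟩⟩
    · exact nonempty_of_not_subset_hyperplane h
  have hcoset : L ∩ L' = (q + ·) '' (N : Set (Fin d → ℝ)) := by
    rw [hLv] at hqL ⊢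
    rw [hL'v] at hqL' ⊢
    rw [image_add_eq_of_mem hqL, image_add_eq_of_mem hqL',
      ← Set.image_inter (add_right_injective q)]
    rfl
  have : DiscreteTopology N :=
    .of_subset (inferInstance : DiscreteTopology Λ) (SetLike.coe_subset_coe.mpr inf_le_left)
  have hspan : span ℝ (N : Set (Fin d → ℝ)) = ⊤ := by
    by_contra hne
    exact h (hcoset ▸ exists_subset_hyperplane_of_span_ne_top q hne)
  refine ⟨1, one_pos, 0, ?_⟩
  simp only [one_smul, add_zero, Set.image_id']
  exact ⟨q, _, isLattice_of_span_eq_top _ hspan, hcoset⟩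
end

section
/- For any nonempty subset S ⊆ R^r, the set 𝔏(S) — defined as the identity component of the closure of the subgroup of R^r generated by S ∪ Z^r — is the unique smallest rational linear subspace L of R^r with the property that there exists a positive integer n such that the subgroup generated by S is contained in n^{-1}Z^r + L. That is: (i) 𝔏(S) is a rational subspace; (ii) there exists n ∈ Z_{>0} with ⟨S⟩ ⊆ n^{-1}Z^r + 𝔏(S); (iii) if L is any rational subspace with ⟨S⟩ ⊆ n^{-1}Z^r + L for some n ∈ Z_{>0}, then 𝔏(S) ⊆ L. -/
/-- The set of integer vectors in ℝ^r. -/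
def intVecs (r : ℕ) : Set (Fin r → ℝ) :=
  Set.range (fun m : Fin r → ℤ => fun i => (m i : ℝ))

/-- `𝔏(S)`: the identity component (connected component of `0`) of the closure of the
additive subgroup of ℝ^r generated by `S ∪ ℤ^r`. -/
def Lfrak {r : ℕ} (S : Set (Fin r → ℝ)) : Set (Fin r → ℝ) :=
  connectedComponentIn
    (closure ((AddSubgroup.closure (S ∪ intVecs r) : AddSubgroup (Fin r → ℝ)) :
      Set (Fin r → ℝ))) 0

/-- A linear subspace of ℝ^r is rational if it is spanned by its integer vectors. -/
def IsRationalSubspace {r : ℕ} (V : Submodule ℝ (Fin r → ℝ)) : Prop :=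
  V = Submodule.span ℝ ((V : Set (Fin r → ℝ)) ∩ intVecs r)

/-- The set `n⁻¹ ℤ^r + L`. -/
def nInvZplus {r : ℕ} (n : ℕ) (L : Set (Fin r → ℝ)) : Set (Fin r → ℝ) :=
  {x | ∃ m ∈ intVecs r, ∃ v ∈ L, x = (n : ℝ)⁻¹ • m + v}

open Submodule Module Filter Pointwise

noncomputable section

namespace LfrakAux

variable {r : ℕ}

abbrev E (r : ℕ) := Fin r → ℝ

/-- The integer lattice as a `ℤ`-submodule. -/
def ΛZ (r : ℕ) : Submodule ℤ (E r) := span ℤ (Set.range (Pi.basisFun ℝ (Fin r)))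

lemma coe_ΛZ : ((ΛZ r : Submodule ℤ (E r)) : Set (E r)) = intVecs r := by
  ext x
  rw [SetLike.mem_coe, ΛZ, Basis.mem_span_iff_repr_mem]
  constructor
  · intro h
    have h' : ∀ i, ∃ m : ℤ, (m : ℝ) = x i := by
      intro i
      obtain ⟨m, hm⟩ := h i
      exact ⟨m, by simpa [Pi.basisFun_repr] using hm⟩
    choose m hm using h'
    exact ⟨m, funext fun i => hm i⟩
  · rintro ⟨m, rfl⟩ i
    exact ⟨m i, by simp [Pi.basisFun_repr]⟩

instance : DiscreteTopology (ΛZ r) := ZSpan.discreteTopology_pi_basisFun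

lemma span_ΛZ_top : span ℝ ((ΛZ r : Submodule ℤ (E r)) : Set (E r)) = ⊤ := by
  rw [← top_le_iff, ← (Pi.basisFun ℝ (Fin r)).span_eq]
  exact span_le.mpr (fun x hx => subset_span (subset_span hx))

variable {F : Type*} [NormedAddCommGroup F] [NormedSpace ℝ F] [FiniteDimensional ℝ F]

/-- A submodule with `0` isolated is discrete. -/
lemma discrete_of_isolated (M : Submodule ℤ F) {ε : ℝ} (hε : 0 < ε)
    (h : ∀ x ∈ M, ‖x‖ < ε → x = 0) : DiscreteTopology M := by
  rw [discreteTopology_iff_isOpen_singleton_zero]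
  refine Metric.isOpen_iff.mpr ?_
  rintro x (rfl : x = 0)
  refine ⟨ε, hε, fun y hy => ?_⟩
  have : ‖(y : F)‖ < ε := by
    simpa [dist_eq_norm] using hy
  exact Subtype.ext (h y y.2 this)

/-- rank of a discrete submodule equals the dimension of its real span. -/
lemma finrank_discrete (M : Submodule ℤ F) [DiscreteTopology M] :
    finrank ℤ M = finrank ℝ (span ℝ (M : Set F)) := by
  let f := (span ℝ (M : Set F)).subtype
  let M₀ := M.comap (f.restrictScalars ℤ)
  have h_img : f '' M₀ = M := by
    rw [← LinearMap.coe_restrictScalars ℤ f, ← Submodule.map_coe (f.restrictScalars ℤ),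
      Submodule.map_comap_eq_self]
    exact fun x hx ↦ LinearMap.mem_range.mpr ⟨⟨x, Submodule.subset_span hx⟩, rfl⟩
  have : DiscreteTopology M₀ := by
    refine DiscreteTopology.preimage_of_continuous_injective (M : Set F) ?_ (injective_subtype _)
    exact LinearMap.continuous_of_finiteDimensional f
  have : IsZLattice ℝ M₀ := ⟨by
    rw [← (Submodule.map_injective_of_injective (injective_subtype _)).eq_iff, Submodule.map_span,
      Submodule.map_top, range_subtype, h_img]⟩
  have h1 : finrank ℤ M₀ = finrank ℝ (span ℝ (M : Set F)) := ZLattice.rank ℝ M₀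
  have e : M₀ ≃ₗ[ℤ] M := by
    refine (Submodule.equivMapOfInjective (f.restrictScalars ℤ) (injective_subtype _) M₀).trans
      (LinearEquiv.ofEq _ _ ?_)
    exact SetLike.ext'_iff.mpr (by simpa using h_img)
  rw [← h1, e.finrank_eq]

variable {F : Type*} [NormedAddCommGroup F] [NormedSpace ℝ F] [FiniteDimensional ℝ F]

/-- If every point of `H` whose projection along `V` is small lies in `V`,
then the connected component of `0` in `H` is `V`. -/
lemma connectedComponentIn_eq (H : Set F) (V W : Submodule ℝ F) (h : IsCompl V W)
    (hVH : (V : Set F) ⊆ H) {ε : ℝ} (hε : 0 < ε)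
    (hiso : ∀ x ∈ H, ‖W.linearProjOfIsCompl V h.symm x‖ < ε → x ∈ V) :
    connectedComponentIn H 0 = V := by
  set π := W.linearProjOfIsCompl V h.symm with hπ
  have hπc : Continuous π := LinearMap.continuous_of_finiteDimensional π
  have h0H : (0 : F) ∈ H := hVH V.zero_mem
  apply subset_antisymm
  · rw [connectedComponentIn_eq_image h0H]
    rintro _ ⟨y, hy, rfl⟩
    have hclopen : IsClopen (Subtype.val ⁻¹' (V : Set F) : Set H) := by
      constructor
      · exact (Submodule.closed_of_finiteDimensional V).preimage continuous_subtype_val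
      · have : (Subtype.val ⁻¹' (V : Set F) : Set H) =
            Subtype.val ⁻¹' (π ⁻¹' Metric.ball 0 ε) := by
          ext z
          simp only [Set.mem_preimage, SetLike.mem_coe, Metric.mem_ball, dist_zero_right]
          constructor
          · intro hz
            have : π (z : F) = 0 := linearProjOfIsCompl_apply_right' h.symm hz
            rw [this]; simpa using hε
          · intro hz
            exact hiso _ z.2 hz
        rw [this]
        exact (Metric.isOpen_ball.preimage hπc).preimage continuous_subtype_val
    have : y ∈ Subtype.val ⁻¹' (V : Set F) :=
      hclopen.connectedComponent_subset (by simp [Submodule.zero_mem]) hy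
    exact this
  · refine IsPreconnected.subset_connectedComponentIn (V.convex.isPreconnected) V.zero_mem hVH

variable {F : Type*} [NormedAddCommGroup F] [NormedSpace ℝ F] [FiniteDimensional ℝ F]

/-- The submodule of lines contained in a subgroup. -/
def lineSub (H : AddSubgroup F) : Submodule ℝ F where
  carrier := {x | ∀ t : ℝ, t • x ∈ H}
  add_mem' hx hy t := by rw [smul_add]; exact AddSubgroup.add_mem _ (hx t) (hy t)
  zero_mem' := fun t => by simpa using AddSubgroup.zero_mem _
  smul_mem' c x hx := fun t => by rw [smul_smul]; exact hx (t * c)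

lemma lineSub_le (H : AddSubgroup F) : (lineSub H : Set F) ⊆ H := by
  intro x hx; simpa using hx 1

lemma exists_isolation (H : AddSubgroup F) (hH : IsClosed (H : Set F))
    (W : Submodule ℝ F) (h : IsCompl (lineSub H) W) :
    ∃ ε > 0, ∀ x ∈ H, ‖W.linearProjOfIsCompl (lineSub H) h.symm x‖ < ε → x ∈ lineSub H := by
  by_contra hc
  push_neg at hc
  set V := lineSub H with hV
  set π := W.linearProjOfIsCompl V h.symm with hπ
  choose! x hxH hxn hxV using fun k : ℕ => hc (1 / (k + 1)) (by positivity)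
  set y : ℕ → F := fun k => (π (x k) : F) with hy
  have hyW : ∀ k, y k ∈ W := fun k => (π (x k)).2
  have hsub : ∀ k, x k - y k ∈ V := by
    intro k
    rw [← linearProjOfIsCompl_apply_eq_zero_iff h.symm, map_sub]
    have : π (y k) = π (x k) := linearProjOfIsCompl_apply_left h.symm (π (x k))
    show π (x k) - π (y k) = 0
    rw [this, sub_self]
  have hyH : ∀ k, y k ∈ H := by
    intro k
    have : y k = x k - (x k - y k) := by abel
    rw [this]
    exact AddSubgroup.sub_mem _ (hxH k) (lineSub_le H (hsub k))
  have hy0 : ∀ k, y k ≠ 0 := by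
    intro k h0
    apply hxV k
    have : π (x k) = 0 := ZeroMemClass.coe_eq_zero.mp h0
    exact (linearProjOfIsCompl_apply_eq_zero_iff h.symm).1 this
  have hynorm : ∀ k, ‖y k‖ < 1 / (k + 1) := by
    intro k
    simpa [hy] using hxn k
  set u : ℕ → F := fun k => ‖y k‖⁻¹ • y k with hu
  have husph : ∀ k, u k ∈ Metric.sphere (0 : F) 1 := by
    intro k
    simp [hu, norm_smul, inv_mul_cancel₀ (norm_ne_zero_iff.2 (hy0 k))]
  obtain ⟨u₀, hu₀, φ, hφ, hlim⟩ := (isCompact_sphere (0 : F) 1).tendsto_subseq husph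
  have hu₀norm : ‖u₀‖ = 1 := by simpa using hu₀
  have hu₀W : u₀ ∈ W :=
    (Submodule.closed_of_finiteDimensional W).mem_of_tendsto hlim
      (.of_forall fun k => W.smul_mem _ (hyW (φ k)))
  have htends0 : Tendsto (fun k => ‖y (φ k)‖) atTop (nhds 0) := by
    refine squeeze_zero (fun k => norm_nonneg _) (fun k => (hynorm (φ k)).le.trans ?_)
      tendsto_one_div_add_atTop_nhds_zero_nat
    have hk : (k : ℝ) ≤ φ k := by exact_mod_cast hφ.le_apply
    gcongr
  have hu₀V : u₀ ∈ V := by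
    intro t
    set c : ℕ → ℤ := fun k => ⌊t / ‖y (φ k)‖⌋ with hcdef
    have hkey : Tendsto (fun k => ((c k : ℝ)) • y (φ k)) atTop (nhds (t • u₀)) := by
      have heq : ∀ k, ((c k : ℝ)) • y (φ k) = ((c k : ℝ) * ‖y (φ k)‖) • u (φ k) := by
        intro k
        have hue : u (φ k) = ‖y (φ k)‖⁻¹ • y (φ k) := rfl
        rw [hue, smul_smul, mul_assoc,
          mul_inv_cancel₀ (norm_ne_zero_iff.2 (hy0 (φ k))), mul_one]
      simp_rw [heq]
      refine Tendsto.smul ?_ hlim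
      rw [tendsto_iff_dist_tendsto_zero]
      refine squeeze_zero (fun k => dist_nonneg) (fun k => ?_) htends0
      rw [Real.dist_eq]
      have hny : 0 < ‖y (φ k)‖ := norm_pos_iff.2 (hy0 (φ k))
      have hck : c k = ⌊t / ‖y (φ k)‖⌋ := rfl
      have hle : (c k : ℝ) ≤ t / ‖y (φ k)‖ := by rw [hck]; exact Int.floor_le _
      have hgt : t / ‖y (φ k)‖ < (c k : ℝ) + 1 := by
        rw [hck]; push_cast; exact Int.lt_floor_add_one _
      have h1 : |(c k : ℝ) - t / ‖y (φ k)‖| ≤ 1 := by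
        rw [abs_le]; constructor <;> linarith
      have : (c k : ℝ) * ‖y (φ k)‖ - t = ((c k : ℝ) - t / ‖y (φ k)‖) * ‖y (φ k)‖ := by
        field_simp
      rw [this, abs_mul, abs_of_pos hny]
      calc |(c k : ℝ) - t / ‖y (φ k)‖| * ‖y (φ k)‖ ≤ 1 * ‖y (φ k)‖ := by gcongr
        _ = ‖y (φ k)‖ := one_mul _
    refine hH.mem_of_tendsto hkey (.of_forall fun k => ?_)
    have := AddSubgroup.zsmul_mem H (hyH (φ k)) (c k)
    rwa [← Int.cast_smul_eq_zsmul ℝ] at this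
  have : u₀ ∈ V ⊓ W := ⟨hu₀V, hu₀W⟩
  rw [h.inf_eq_bot] at this
  rw [Submodule.mem_bot] at this
  rw [this] at hu₀norm
  simp at hu₀norm

variable {F : Type*} [NormedAddCommGroup F] [NormedSpace ℝ F] [FiniteDimensional ℝ F]

/-- If a discrete submodule `D` contains a lattice `Λ'` of full span, then some positive
multiple of `D` lands in `Λ'`. -/
lemma exists_nsmul_mem (Λ' D : Submodule ℤ F) [DiscreteTopology D] (hΛD : Λ' ≤ D)
    (hspan : span ℝ (Λ' : Set F) = ⊤) :
    ∃ n : ℕ, 0 < n ∧ ∀ x ∈ D, n • x ∈ Λ' := by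
  classical
  have hΛdisc : DiscreteTopology Λ' :=
    DiscreteTopology.of_subset (inferInstance : DiscreteTopology (D : Set F)) hΛD
  have hZL : IsZLattice ℝ Λ' := ⟨hspan⟩
  -- torsion for each element of D
  have htor : ∀ x ∈ D, ∃ k : ℕ, 0 < k ∧ k • x ∈ Λ' := by
    intro x hx
    set b₀ := Module.Free.chooseBasis ℤ Λ' with hb₀
    set b := Basis.ofZLatticeBasis ℝ Λ' b₀ with hb
    have hbs : span ℤ (Set.range b) = Λ' := Basis.ofZLatticeBasis_span ℝ Λ' b₀
    have hdg : DiscreteTopology D.toAddSubgroup := inferInstanceAs (DiscreteTopology D)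
    have hfin : (ZSpan.fundamentalDomain b ∩ (D : Set F)).Finite :=
      Metric.finite_isBounded_inter_isClosed DiscreteTopology.isDiscrete (ZSpan.fundamentalDomain_isBounded b)
        (AddSubgroup.isClosed_of_discrete (H := D.toAddSubgroup))
    have hmem : ∀ j : ℕ, ZSpan.fract b (j • x) ∈ ZSpan.fundamentalDomain b ∩ (D : Set F) := by
      intro j
      refine ⟨ZSpan.fract_mem_fundamentalDomain b _, ?_⟩
      have hjx : (j : ℕ) • x ∈ D := by
        rw [← natCast_zsmul]; exact D.smul_mem _ hx
      have hz : ∃ c : F, c ∈ span ℤ (Set.range ⇑b) ∧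
          ZSpan.fract b ((j : ℕ) • x) = (j : ℕ) • x - c :=
        ⟨_, SetLike.coe_mem _, ZSpan.fract_apply b _⟩
      obtain ⟨c, hc, hceq⟩ := hz
      rw [hbs] at hc
      rw [hceq]
      exact D.sub_mem hjx (hΛD hc)
    have : Finite {y // y ∈ ZSpan.fundamentalDomain b ∩ (D : Set F)} := hfin.to_subtype
    obtain ⟨j, j', hjj', heq⟩ := Finite.exists_ne_map_eq_of_infinite
      (fun j : ℕ => (⟨ZSpan.fract b (j • x), hmem j⟩ :
        {y // y ∈ ZSpan.fundamentalDomain b ∩ (D : Set F)}))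
    have heq' : ZSpan.fract b (j • x) = ZSpan.fract b (j' • x) := congrArg Subtype.val heq
    rcases hjj'.lt_or_gt with hlt | hlt
    · refine ⟨j' - j, Nat.sub_pos_of_lt hlt, ?_⟩
      have h2 := (ZSpan.fract_eq_fract b (j • x) (j' • x)).mp heq'
      rw [hbs] at h2
      rwa [sub_nsmul x hlt.le, add_comm]
    · refine ⟨j - j', Nat.sub_pos_of_lt hlt, ?_⟩
      have h2 := (ZSpan.fract_eq_fract b (j' • x) (j • x)).mp heq'.symm
      rw [hbs] at h2
      rwa [sub_nsmul x hlt.le, add_comm]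
  -- get generators
  have hDfin : Module.Finite ℤ D := inferInstance
  obtain ⟨s, hs⟩ := (Module.Finite.iff_fg.mp hDfin)
  choose! k hk0 hkmem using fun g (hg : g ∈ (s : Set F)) => htor g (hs ▸ subset_span hg)
  set n : ℕ := ∏ g ∈ s, k g with hn
  have hnpos : 0 < n := Finset.prod_pos (fun g hg => hk0 g hg)
  refine ⟨n, hnpos, ?_⟩
  let M : Submodule ℤ F :=
    { carrier := {x | n • x ∈ Λ'},
      add_mem' := fun {a b} ha hb => by simpa [smul_add] using Λ'.add_mem ha hb,
      zero_mem' := by simp [Λ'.zero_mem],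
      smul_mem' := fun c x hx => by
        simpa [smul_comm c n x] using Λ'.smul_mem c hx }
  have hM : D ≤ M := by
    rw [← hs]
    refine span_le.mpr (fun g hg => ?_)
    have hdvd : k g ∣ n := Finset.dvd_prod_of_mem k hg
    obtain ⟨c, hc⟩ := hdvd
    show n • g ∈ Λ'
    rw [hc, mul_comm, mul_smul, ← natCast_zsmul]
    exact Λ'.smul_mem _ (hkmem g hg)
  exact fun x hx => hM hx

/-- Isolation of the projected integer lattice along a rational subspace. -/
lemma rational_isolated {r : ℕ} (L W : Submodule ℝ (E r)) (h : IsCompl L W)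
    (hrat : span ℝ ((L : Set (E r)) ∩ intVecs r) = L) :
    ∃ ε > 0, ∀ m ∈ intVecs r,
      ‖W.linearProjOfIsCompl L h.symm m‖ < ε → W.linearProjOfIsCompl L h.symm m = 0 := by
  classical
  set π := W.linearProjOfIsCompl L h.symm with hπdef
  set ρ := L.linearProjOfIsCompl W h with hρdef
  -- the integer points of L, inside the space ↥L
  set K₀ : Submodule ℤ ↥L := (ΛZ r).comap ((L.subtype).restrictScalars ℤ) with hK₀
  have hK₀img : (L.subtype) '' K₀ = (L : Set (E r)) ∩ intVecs r := by
    rw [← coe_ΛZ]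
    ext z
    simp only [Set.mem_image, SetLike.mem_coe, Set.mem_inter_iff]
    constructor
    · rintro ⟨y, hy, rfl⟩
      exact ⟨y.2, hy⟩
    · rintro ⟨hz1, hz2⟩
      exact ⟨⟨z, hz1⟩, hz2, rfl⟩
  have hK₀disc : DiscreteTopology K₀ := by
    haveI : DiscreteTopology ((ΛZ r) : Set (E r)) := (inferInstance : DiscreteTopology ↥(ΛZ r))
    exact DiscreteTopology.preimage_of_continuous_injective ((ΛZ r) : Set (E r))
      (LinearMap.continuous_of_finiteDimensional (L.subtype)) (injective_subtype _)
  have hK₀span : span ℝ (K₀ : Set ↥L) = ⊤ := by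
    apply Submodule.map_injective_of_injective (injective_subtype L)
    rw [Submodule.map_span, Submodule.map_top, range_subtype, hK₀img, hrat]
  have hZL : IsZLattice ℝ K₀ := ⟨hK₀span⟩
  set b₀ := Module.Free.chooseBasis ℤ K₀ with hb₀
  set b := Basis.ofZLatticeBasis ℝ K₀ b₀ with hb
  have hbs : span ℤ (Set.range b) = K₀ := Basis.ofZLatticeBasis_span ℝ K₀ b₀
  obtain ⟨R, hR⟩ := (ZSpan.fundamentalDomain_isBounded b).subset_closedBall 0
  -- the set of small projections of integer vectors is finite
  have hfinB : ((Metric.closedBall (0 : E r) (R + 1)) ∩ ((ΛZ r) : Set (E r))).Finite := by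
    have i1 : DiscreteTopology ↥(ΛZ r) := inferInstance
    have i2 : DiscreteTopology ((ΛZ r) : Set (E r)) := i1
    have i3 : DiscreteTopology ↥(ΛZ r).toAddSubgroup := i1
    exact Metric.finite_isBounded_inter_isClosed DiscreteTopology.isDiscrete Metric.isBounded_closedBall
      (AddSubgroup.isClosed_of_discrete (H := (ΛZ r).toAddSubgroup))
  set A : Set ↥W := π '' ((Metric.closedBall (0 : E r) (R + 1)) ∩ ((ΛZ r) : Set (E r)))
    with hA
  have hAfin : A.Finite := (hfinB.image π)
  -- every small projection lies in A
  have hsmall : ∀ m ∈ intVecs r, ‖π m‖ ≤ 1 → π m ∈ A := by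
    intro m hm hnorm
    have hmΛ : m ∈ ΛZ r := by rw [← SetLike.mem_coe, coe_ΛZ]; exact hm
    -- reduce mod K₀
    set fl : ↥L := (ZSpan.floor b (ρ m) : ↥L) with hfl
    have hflK : fl ∈ K₀ := hbs ▸ SetLike.coe_mem _
    have hflΛ : (fl : E r) ∈ ΛZ r := hflK
    set m' := m - (fl : E r) with hm'
    have hm'Λ : m' ∈ ΛZ r := (ΛZ r).sub_mem hmΛ hflΛ
    have hπm' : π m' = π m := by
      rw [hm', map_sub]
      have : π (fl : E r) = 0 := linearProjOfIsCompl_apply_right' h.symm fl.2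
      rw [this, sub_zero]
    have hdecomp : m = (ρ m : E r) + ((π m : ↥W) : E r) :=
      (Submodule.projection_add_projection_eq_self h m).symm
    have hm'eq : m' = ((ZSpan.fract b (ρ m) : ↥L) : E r) + ((π m : ↥W) : E r) := by
      rw [hm', ZSpan.fract_apply]
      rw [AddSubgroupClass.coe_sub]
      rw [← hfl]
      calc m - (fl : E r) = ((ρ m : E r) + ((π m : ↥W) : E r)) - (fl : E r) := by
            rw [← hdecomp]
        _ = ((ρ m : E r) - (fl : E r)) + ((π m : ↥W) : E r) := by ring
    have hnorm' : ‖m'‖ ≤ R + 1 := by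
      rw [hm'eq]
      refine (norm_add_le _ _).trans ?_
      have h1 : ‖((ZSpan.fract b (ρ m) : ↥L) : E r)‖ ≤ R := by
        have := hR (ZSpan.fract_mem_fundamentalDomain b (ρ m))
        simpa [Metric.mem_closedBall, dist_zero_right] using this
      have h2 : ‖((π m : ↥W) : E r)‖ ≤ 1 := by
        simpa using hnorm
      linarith
    rw [← hπm']
    exact ⟨m', ⟨by simpa [Metric.mem_closedBall, dist_zero_right] using hnorm', hm'Λ⟩, rfl⟩
  -- take the minimum positive norm
  set t : Finset ℝ := insert (1 : ℝ) ((hAfin.toFinset.filter (fun y => y ≠ 0)).image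
    (fun y => ‖y‖)) with ht
  have htne : t.Nonempty := ⟨1, Finset.mem_insert_self _ _⟩
  set ε := t.min' htne with hε
  have hεpos : 0 < ε := by
    apply lt_of_lt_of_le ?_ (le_refl ε)
    rw [hε]
    apply Finset.lt_min'_iff t htne |>.mpr
    intro y hy
    rcases Finset.mem_insert.mp hy with rfl | hy
    · norm_num
    · obtain ⟨z, hz, rfl⟩ := Finset.mem_image.mp hy
      have hz0 : z ≠ 0 := (Finset.mem_filter.mp hz).2
      exact norm_pos_iff.mpr hz0
  refine ⟨ε, hεpos, fun m hm hlt => ?_⟩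
  have hε1 : ε ≤ 1 := Finset.min'_le t 1 (Finset.mem_insert_self _ _)
  have hmA : π m ∈ A := hsmall m hm (le_of_lt (lt_of_lt_of_le hlt hε1))
  by_contra h0
  have : ‖π m‖ ∈ t := by
    refine Finset.mem_insert_of_mem (Finset.mem_image.mpr ⟨π m, ?_, rfl⟩)
    exact Finset.mem_filter.mpr ⟨hAfin.mem_toFinset.mpr hmA, h0⟩
  exact absurd (Finset.min'_le t _ this) (not_le.mpr hlt)

lemma intVecs_add {r : ℕ} {a b : E r} (ha : a ∈ intVecs r) (hb : b ∈ intVecs r) :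
    a + b ∈ intVecs r := by
  rw [← coe_ΛZ] at *
  exact (ΛZ r).add_mem ha hb

lemma intVecs_neg {r : ℕ} {a : E r} (ha : a ∈ intVecs r) : -a ∈ intVecs r := by
  rw [← coe_ΛZ] at *
  exact (ΛZ r).neg_mem ha

lemma zero_mem_intVecs {r : ℕ} : (0 : E r) ∈ intVecs r :=
  ⟨0, by funext i; simp⟩

lemma minimality {r : ℕ} (S : Set (E r)) (L : Submodule ℝ (E r))
    (hrat : span ℝ ((L : Set (E r)) ∩ intVecs r) = L) {n : ℕ} (hn : 0 < n)
    (hsub : ((AddSubgroup.closure S : AddSubgroup (E r)) : Set (E r)) ⊆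
      nInvZplus n (L : Set (E r))) :
    Lfrak S ⊆ (L : Set (E r)) := by
  classical
  obtain ⟨W, hW⟩ := Submodule.exists_isCompl L
  set π := W.linearProjOfIsCompl L hW.symm with hπdef
  obtain ⟨ε, hε, hiso⟩ := rational_isolated L W hW hrat
  set T := nInvZplus n (L : Set (E r)) with hTdef
  have hnR : (0 : ℝ) < n := by exact_mod_cast hn
  have hLT : (L : Set (E r)) ⊆ T := fun v hv => ⟨0, zero_mem_intVecs, v, hv, by simp⟩
  have hIT : intVecs r ⊆ T := by
    rintro _ ⟨mz, rfl⟩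
    refine ⟨fun i => (((n : ℤ) * mz i : ℤ) : ℝ), ⟨fun i => (n : ℤ) * mz i, rfl⟩,
      0, L.zero_mem, ?_⟩
    funext i
    show (mz i : ℝ) = ((n : ℝ)⁻¹ • fun i => (((n : ℤ) * mz i : ℤ) : ℝ)) i + 0
    simp only [Pi.smul_apply, smul_eq_mul, add_zero]
    push_cast
    rw [← mul_assoc, inv_mul_cancel₀ (ne_of_gt hnR), one_mul]
  have hST : S ⊆ T := fun x hx => hsub (AddSubgroup.subset_closure hx)
  -- T is an additive subgroup
  set Tgrp : AddSubgroup (E r) :=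
    { carrier := T,
      zero_mem' := hLT L.zero_mem,
      add_mem' := by
        rintro a b ⟨m, hm, v, hv, rfl⟩ ⟨m', hm', v', hv', rfl⟩
        exact ⟨m + m', intVecs_add hm hm', v + v', L.add_mem hv hv', by
          rw [smul_add]; abel⟩,
      neg_mem' := by
        rintro a ⟨m, hm, v, hv, rfl⟩
        exact ⟨-m, intVecs_neg hm, -v, L.neg_mem hv, by rw [smul_neg]; abel⟩ } with hTgrp
  -- the image lattice is discrete, hence closed
  set Λ'' : Submodule ℤ ↥W := Submodule.map (π.restrictScalars ℤ) (ΛZ r) with hΛ''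
  have hΛ''disc : DiscreteTopology Λ'' := by
    refine discrete_of_isolated Λ'' hε ?_
    rintro y ⟨m, hm, rfl⟩ hnorm
    exact hiso m (by rw [← coe_ΛZ]; exact hm) hnorm
  have hΛ''closed : IsClosed (Λ'' : Set ↥W) := by
    have i3 : DiscreteTopology ↥Λ''.toAddSubgroup := hΛ''disc
    exact AddSubgroup.isClosed_of_discrete (H := Λ''.toAddSubgroup)
  -- characterization of T via π
  have hTchar : T = π ⁻¹' ((n : ℝ)⁻¹ • (Λ'' : Set ↥W)) := by
    ext x
    constructor
    · rintro ⟨m, hm, v, hv, rfl⟩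
      have hπ : π ((n : ℝ)⁻¹ • m + v) = (n : ℝ)⁻¹ • π m := by
        have hv0 : π v = 0 := linearProjOfIsCompl_apply_right' hW.symm hv
        rw [map_add, map_smul, hv0, add_zero]
      rw [Set.mem_preimage, hπ]
      rw [← coe_ΛZ] at hm
      exact Set.smul_mem_smul_set (Submodule.mem_map_of_mem hm)
    · intro hx
      obtain ⟨y, hy, hxy⟩ := hx
      obtain ⟨m, hm, hym⟩ := hy
      have hym' : π m = y := hym
      have hxy' : (n : ℝ)⁻¹ • y = π x := hxy
      refine ⟨m, by rw [← coe_ΛZ]; exact hm, x - (n : ℝ)⁻¹ • m, ?_, by abel⟩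
      have h0 : π (x - (n : ℝ)⁻¹ • m) = 0 := by
        rw [map_sub, map_smul, hym', hxy', sub_self]
      exact (linearProjOfIsCompl_apply_eq_zero_iff hW.symm).mp h0
  have hTclosed : IsClosed T := by
    rw [hTchar]
    exact (hΛ''closed.smul_of_ne_zero (inv_ne_zero (ne_of_gt hnR))).preimage
      (LinearMap.continuous_of_finiteDimensional π)
  -- the closure of the generated subgroup is inside T
  have hHT : closure ((AddSubgroup.closure (S ∪ intVecs r) : AddSubgroup (E r)) :
      Set (E r)) ⊆ T := by
    refine closure_minimal ?_ hTclosed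
    have : AddSubgroup.closure (S ∪ intVecs r) ≤ Tgrp :=
      (AddSubgroup.closure_le Tgrp).mpr (Set.union_subset hST hIT)
    exact this
  -- conclude
  have hmono : Lfrak S ⊆ connectedComponentIn T 0 := connectedComponentIn_mono 0 hHT
  have hcc : connectedComponentIn T 0 = (L : Set (E r)) := by
    refine connectedComponentIn_eq T L W hW hLT (ε := ε / n) (by positivity) ?_
    intro x hx hxnorm
    rw [hTchar, Set.mem_preimage] at hx
    obtain ⟨y, hy, hxy⟩ := hx
    obtain ⟨m, hm, hym⟩ := hy
    have hym' : π m = y := hym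
    have hxy' : (n : ℝ)⁻¹ • y = π x := hxy
    have hπm0 : π m = 0 := by
      refine hiso m (by rw [← coe_ΛZ]; exact hm) ?_
      have h1 : ‖π x‖ = (n : ℝ)⁻¹ * ‖π m‖ := by
        rw [← hxy', ← hym']
        rw [norm_smul ((n : ℝ)⁻¹) (π m)]
        simp [abs_of_pos (inv_pos.mpr hnR)]
      have := hxnorm
      rw [h1] at this
      calc ‖π m‖ = n * ((n : ℝ)⁻¹ * ‖π m‖) := by field_simp
        _ < n * (ε / n) := by exact (mul_lt_mul_iff_right₀ hnR).mpr this
        _ = ε := by field_simp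
    have : π x = 0 := by rw [← hxy', ← hym', hπm0, smul_zero]
    exact (linearProjOfIsCompl_apply_eq_zero_iff hW.symm).mp this
  exact hmono.trans hcc.subset

lemma int_isolated {r : ℕ} {x : E r} (hx : x ∈ ΛZ r) (h : ‖x‖ < 1) : x = 0 := by
  rw [← SetLike.mem_coe, coe_ΛZ] at hx
  obtain ⟨m, rfl⟩ := hx
  have hm : ∀ i, m i = 0 := by
    intro i
    have h1 : ‖(m i : ℝ)‖ ≤ ‖fun i => (m i : ℝ)‖ := by
      exact norm_le_pi_norm (fun i => (m i : ℝ)) i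
    have h2 : |(m i : ℝ)| < 1 := by
      rw [← Real.norm_eq_abs]
      exact lt_of_le_of_lt h1 h
    have : |m i| < 1 := by exact_mod_cast h2
    exact Int.abs_lt_one_iff.mp this
  funext i
  simp [hm i]

set_option maxHeartbeats 1000000 in
theorem main_construction (r : ℕ) (S : Set (E r)) :
    ∃ L₀ : Submodule ℝ (E r),
      (L₀ : Submodule ℝ (E r)) = span ℝ ((L₀ : Set (E r)) ∩ intVecs r) ∧
      Lfrak S = (L₀ : Set (E r)) ∧
      (∃ n : ℕ, 0 < n ∧
        ((AddSubgroup.closure S : AddSubgroup (E r)) : Set (E r)) ⊆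
          nInvZplus n (L₀ : Set (E r))) := by
  classical
  set G : AddSubgroup (E r) := AddSubgroup.closure (S ∪ intVecs r) with hG
  set Hgrp : AddSubgroup (E r) := G.topologicalClosure with hH
  have hHset : (Hgrp : Set (E r)) = closure (G : Set (E r)) :=
    AddSubgroup.topologicalClosure_coe
  have hHclosed : IsClosed (Hgrp : Set (E r)) := by
    rw [hHset]; exact isClosed_closure
  set V := lineSub Hgrp with hV
  obtain ⟨W, hW⟩ := Submodule.exists_isCompl V
  obtain ⟨ε, hε, hiso⟩ := exists_isolation Hgrp hHclosed W hW
  set π := W.linearProjOfIsCompl V hW.symm with hπdef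
  set ρ := V.linearProjOfIsCompl W hW with hρdef
  have hVH : (V : Set (E r)) ⊆ (Hgrp : Set (E r)) := lineSub_le Hgrp
  have hLfrak : Lfrak S = (V : Set (E r)) := by
    show connectedComponentIn (closure (G : Set (E r))) 0 = (V : Set (E r))
    rw [← hHset]
    exact connectedComponentIn_eq (Hgrp : Set (E r)) V W hW hVH hε hiso
  have hIVH : intVecs r ⊆ (Hgrp : Set (E r)) := by
    intro m hm
    rw [hHset]
    exact subset_closure (AddSubgroup.subset_closure (Or.inr hm))
  have hdecomp : ∀ x : E r, ((ρ x : E r)) + ((π x : E r)) = x := fun x =>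
    Submodule.projection_add_projection_eq_self hW x
  have hπH : ∀ x ∈ Hgrp, ((π x : ↥W) : E r) ∈ Hgrp := by
    intro x hx
    have h1 : ((π x : ↥W) : E r) = x - (ρ x : E r) :=
      eq_sub_of_add_eq' (hdecomp x)
    rw [h1]
    exact Hgrp.sub_mem hx (hVH (ρ x).2)
  set D : Submodule ℤ ↥W :=
    { carrier := {w : ↥W | (w : E r) ∈ Hgrp},
      add_mem' := fun {a b} ha hb => by
        show ((a + b : ↥W) : E r) ∈ Hgrp
        exact Hgrp.add_mem ha hb,
      zero_mem' := by
        show ((0 : ↥W) : E r) ∈ Hgrp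
        simpa using Hgrp.zero_mem,
      smul_mem' := fun c x hx => by
        show ((c • x : ↥W) : E r) ∈ Hgrp
        have : ((c • x : ↥W) : E r) = c • (x : E r) := rfl
        rw [this]
        exact AddSubgroup.zsmul_mem Hgrp hx c } with hD
  have hDdisc : DiscreteTopology D := by
    refine discrete_of_isolated D hε ?_
    intro w hw hnorm
    have h1 : π (w : E r) = w := linearProjOfIsCompl_apply_left hW.symm w
    have h2 : (w : E r) ∈ V := hiso _ hw (by rw [h1]; exact hnorm)
    have h3 : (w : E r) ∈ V ⊓ W := ⟨h2, w.2⟩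
    rw [hW.inf_eq_bot, Submodule.mem_bot] at h3
    exact Subtype.ext h3
  set Λ'' : Submodule ℤ ↥W := Submodule.map (π.restrictScalars ℤ) (ΛZ r) with hΛ''
  have hΛ''D : Λ'' ≤ D := by
    rintro y ⟨m, hm, hym⟩
    show (y : E r) ∈ Hgrp
    have hym' : π m = y := hym
    have h1 : ((π m : ↥W) : E r) = m - (ρ m : E r) :=
      eq_sub_of_add_eq' (hdecomp m)
    rw [← hym', h1]
    exact Hgrp.sub_mem (hIVH (by rw [← coe_ΛZ]; exact hm)) (hVH (ρ m).2)
  have hΛ''span : span ℝ (Λ'' : Set ↥W) = ⊤ := by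
    have hset : (Λ'' : Set ↥W) = π '' ((ΛZ r : Submodule ℤ (E r)) : Set (E r)) :=
      Submodule.map_coe _ _
    rw [hset, Submodule.span_image, span_ΛZ_top, Submodule.map_top]
    exact linearProjOfIsCompl_range _
  obtain ⟨n, hn, hnmem⟩ := exists_nsmul_mem Λ'' D hΛ''D hΛ''span
  have hnR : (0 : ℝ) < n := by exact_mod_cast hn
  have hsub : ((AddSubgroup.closure S : AddSubgroup (E r)) : Set (E r)) ⊆
      nInvZplus n (V : Set (E r)) := by
    intro x hx
    have hxH : x ∈ Hgrp :=
      G.le_topologicalClosure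
        (SetLike.le_def.mp (AddSubgroup.closure_mono Set.subset_union_left) hx)
    have hπD : π x ∈ D := hπH x hxH
    obtain ⟨m, hm, hπm⟩ := hnmem (π x) hπD
    have hπm' : π m = n • π x := hπm
    refine ⟨m, by rw [← coe_ΛZ]; exact hm,
      (ρ x : E r) - (n : ℝ)⁻¹ • (ρ m : E r),
      V.sub_mem (ρ x).2 (V.smul_mem _ (ρ m).2), ?_⟩
    have hπmx : ((π m : ↥W) : E r) = (n : ℝ) • ((π x : ↥W) : E r) := by
      rw [hπm']
      have : ((n • π x : ↥W) : E r) = n • ((π x : ↥W) : E r) := rfl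
      rw [this, ← Nat.cast_smul_eq_nsmul ℝ]
    have hdm := hdecomp m
    have hdx := hdecomp x
    have hsm : (n : ℝ)⁻¹ • m = (n : ℝ)⁻¹ • (ρ m : E r) + ((π x : ↥W) : E r) := by
      conv_lhs => rw [← hdm]
      rw [smul_add, hπmx, smul_smul, inv_mul_cancel₀ (ne_of_gt hnR), one_smul]
    rw [hsm]
    conv_lhs => rw [← hdx]
    abel
  -- rationality
  set K : Submodule ℤ (E r) := (ΛZ r) ⊓ (V.restrictScalars ℤ) with hK
  have hKdisc : DiscreteTopology K :=
    discrete_of_isolated K one_pos (fun x hx h1 => int_isolated hx.1 h1)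
  have hΛ''disc : DiscreteTopology Λ'' :=
    DiscreteTopology.of_subset (hDdisc : DiscreteTopology (D : Set ↥W)) hΛ''D
  set f : ↥(ΛZ r) →ₗ[ℤ] ↥Λ'' :=
    LinearMap.codRestrict Λ'' ((π.restrictScalars ℤ).comp (ΛZ r).subtype)
      (fun c => Submodule.mem_map_of_mem c.2) with hf
  have hfsurj : Function.Surjective f := by
    rintro ⟨y, hy⟩
    obtain ⟨m, hm, hym⟩ := hy
    exact ⟨⟨m, hm⟩, Subtype.ext hym⟩
  haveI : Module.Free ℤ ↥Λ'' := inferInstance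
  obtain ⟨sec, hsec⟩ := Module.projective_lifting_property f LinearMap.id hfsurj
  have hseceq : ∀ y, f (sec y) = y := fun y => LinearMap.congr_fun hsec y
  have hsecinj : Function.Injective sec := by
    intro a b hab
    rw [← hseceq a, ← hseceq b, hab]
  have hcompl : IsCompl (LinearMap.ker f) (LinearMap.range sec) := by
    constructor
    · rw [disjoint_iff]
      ext x
      simp only [Submodule.mem_inf, LinearMap.mem_ker, LinearMap.mem_range, Submodule.mem_bot]
      constructor
      · rintro ⟨hk, y, rfl⟩
        rw [hseceq y] at hk
        rw [hk]
        simp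
      · rintro rfl
        exact ⟨by simp, 0, by simp⟩
    · rw [codisjoint_iff, eq_top_iff]
      intro x _
      rw [Submodule.mem_sup]
      refine ⟨x - sec (f x), ?_, sec (f x), ⟨f x, rfl⟩, by abel⟩
      rw [LinearMap.mem_ker, map_sub, hseceq, sub_self]
  -- the kernel is the set of integer points of V
  have hker_mem : ∀ x : ↥(LinearMap.ker f), (((x : ↥(ΛZ r)) : E r)) ∈ K := by
    intro x
    refine ⟨(x : ↥(ΛZ r)).2, ?_⟩
    have hfx : f (x : ↥(ΛZ r)) = 0 := x.2
    have hπx : π ((x : ↥(ΛZ r)) : E r) = 0 := congrArg Subtype.val hfx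
    exact (linearProjOfIsCompl_apply_eq_zero_iff hW.symm).mp hπx
  set e2 : ↥(LinearMap.ker f) ≃ₗ[ℤ] ↥K :=
    { toFun := fun x => ⟨((x : ↥(ΛZ r)) : E r), hker_mem x⟩,
      map_add' := fun a b => rfl,
      map_smul' := fun c a => rfl,
      invFun := fun y => ⟨⟨(y : E r), y.2.1⟩, by
        rw [LinearMap.mem_ker]
        refine Subtype.ext ?_
        show π (y : E r) = 0
        exact (linearProjOfIsCompl_apply_eq_zero_iff hW.symm).mpr y.2.2⟩,
      left_inv := fun x => by ext; rfl,
      right_inv := fun y => rfl } with he2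
  set e3 := LinearEquiv.ofInjective sec hsecinj with he3
  haveI kerfin : Module.Finite ℤ ↥(LinearMap.ker f) := Module.Finite.equiv e2.symm
  haveI kerfree : Module.Free ℤ ↥(LinearMap.ker f) := Module.Free.of_equiv e2.symm
  haveI rfin : Module.Finite ℤ ↥(LinearMap.range sec) := Module.Finite.equiv e3
  haveI rfree : Module.Free ℤ ↥(LinearMap.range sec) := Module.Free.of_equiv e3
  have h1 : finrank ℤ ↥(ΛZ r) = r := by
    rw [finrank_discrete (ΛZ r), span_ΛZ_top, finrank_top, finrank_pi, Fintype.card_fin]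
  have h2 : finrank ℤ ↥Λ'' = finrank ℝ ↥W := by
    rw [finrank_discrete Λ'', hΛ''span, finrank_top]
  have h3 : finrank ℝ ↥V + finrank ℝ ↥W = r := by
    have := Submodule.finrank_add_eq_of_isCompl hW
    rwa [finrank_pi, Fintype.card_fin] at this
  have h4 : finrank ℤ ↥(ΛZ r) =
      finrank ℤ ↥(LinearMap.ker f) + finrank ℤ ↥(LinearMap.range sec) := by
    have := (Submodule.prodEquivOfIsCompl _ _ hcompl).finrank_eq
    rw [Module.finrank_prod] at this
    omega
  have h5 : finrank ℤ ↥(LinearMap.range sec) = finrank ℤ ↥Λ'' := e3.finrank_eq.symm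
  have h6 : finrank ℤ ↥K = finrank ℝ ↥(span ℝ (K : Set (E r))) := finrank_discrete K
  have h6' : finrank ℤ ↥(LinearMap.ker f) = finrank ℤ ↥K := e2.finrank_eq
  have h7 : span ℝ (K : Set (E r)) ≤ V := by
    rw [span_le]
    intro x hx
    exact hx.2
  have h8 : finrank ℝ ↥V ≤ finrank ℝ ↥(span ℝ (K : Set (E r))) := by omega
  have hKV : span ℝ (K : Set (E r)) = V := Submodule.eq_of_le_of_finrank_le h7 h8
  have hKset : (K : Set (E r)) = (V : Set (E r)) ∩ intVecs r := by
    ext x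
    constructor
    · intro hx
      have hx' : x ∈ K := hx
      have h1 : x ∈ ((ΛZ r : Submodule ℤ (E r)) : Set (E r)) := hx'.1
      rw [coe_ΛZ] at h1
      exact ⟨hx'.2, h1⟩
    · rintro ⟨hxV, hxI⟩
      have h1 : x ∈ ((ΛZ r : Submodule ℤ (E r)) : Set (E r)) := by rw [coe_ΛZ]; exact hxI
      exact Submodule.mem_inf.mpr ⟨h1, hxV⟩
  refine ⟨V, ?_, hLfrak, ⟨n, hn, hsub⟩⟩
  rw [← hKset, hKV]

end LfrakAux


/-- `𝔏(S)` is the unique smallest rational subspace `L` of ℝ^r such that the subgroup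
generated by `S` is contained in `n⁻¹ ℤ^r + L` for some positive integer `n`. -/
theorem Lfrak_smallest_rational_subspace (r : ℕ) (S : Set (Fin r → ℝ))
    (hS : S.Nonempty) :
    ∃ L₀ : Submodule ℝ (Fin r → ℝ),
      IsRationalSubspace L₀ ∧ Lfrak S = (L₀ : Set (Fin r → ℝ)) ∧
      (∃ n : ℕ, 0 < n ∧
        ((AddSubgroup.closure S : AddSubgroup (Fin r → ℝ)) : Set (Fin r → ℝ)) ⊆
          nInvZplus n (L₀ : Set (Fin r → ℝ))) ∧
      (∀ L : Submodule ℝ (Fin r → ℝ), IsRationalSubspace L →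
        (∃ n : ℕ, 0 < n ∧
          ((AddSubgroup.closure S : AddSubgroup (Fin r → ℝ)) : Set (Fin r → ℝ)) ⊆
            nInvZplus n (L : Set (Fin r → ℝ))) →
        Lfrak S ⊆ (L : Set (Fin r → ℝ))) := by
  obtain ⟨L₀, hrat, hL, hn⟩ := LfrakAux.main_construction r S
  refine ⟨L₀, hrat, hL, hn, ?_⟩
  rintro L hLrat ⟨n', hn', hsub'⟩
  exact LfrakAux.minimality S L hLrat.symm hn' hsub'
end
end

section
/- For any nonempty subset S ⊆ R^r and any vector a ∈ Q^r, the vector a is orthogonal to 𝔏(S) if and only if there exists a positive integer n such that a·v ∈ n^{-1}Z for all v ∈ S. -/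
open Set Filter Topology

/-- The linear functional `x ↦ ∑ bᵢ xᵢ` for an integer vector `b`. -/
noncomputable def phiL {r : ℕ} (b : Fin r → ℤ) : (Fin r → ℝ) →ₗ[ℝ] ℝ where
  toFun x := ∑ i, (b i : ℝ) * x i
  map_add' x y := by
    simp [mul_add, Finset.sum_add_distrib]
  map_smul' t x := by
    simp [Finset.mul_sum, mul_left_comm]

lemma phiL_apply {r : ℕ} (b : Fin r → ℤ) (x : Fin r → ℝ) :
    phiL b x = ∑ i, (b i : ℝ) * x i := rfl

/-- A coset of a nontrivial discrete subgroup `cℤ` of `ℝ` is closed. -/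
lemma isClosed_coset (y c : ℝ) (hc : c ≠ 0) :
    IsClosed {x : ℝ | ∃ m : ℤ, x = y + m * c} := by
  have h1 : {x : ℝ | ∃ m : ℤ, x = y + m * c}
      = Set.range ((fun t : ℝ => y + t * c) ∘ (fun m : ℤ => (m : ℝ))) := by
    ext x
    simp [eq_comm, Function.comp]
  rw [h1]
  have h2 : IsClosedEmbedding ((fun t : ℝ => y + t * c)) := by
    exact ((Homeomorph.mulRight₀ c hc).trans (Homeomorph.addLeft y)).isClosedEmbedding
  exact (h2.comp Int.isClosedEmbedding_coe_real).isClosed_range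

/-- A preconnected subset of `ℝ` containing `0` and contained in `cℤ` is `{0}`. -/
lemma preconnected_in_discrete {A : Set ℝ} {c : ℝ} (hc : 0 < c)
    (hA : IsPreconnected A) (h0 : (0 : ℝ) ∈ A)
    (hsub : ∀ x ∈ A, ∃ m : ℤ, x = m * c) : ∀ x ∈ A, x = 0 := by
  intro x hx
  rcases lt_trichotomy x 0 with hlt | heq | hgt
  · exfalso
    have hicc : Set.Icc x 0 ⊆ A := hA.Icc_subset hx h0
    set t : ℝ := max x (-c) / 2 with ht
    have htmem : t ∈ Set.Icc x 0 := by
      constructor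
      · have : x ≤ max x (-c) := le_max_left _ _
        nlinarith [le_max_left x (-c)]
      · have h1 : max x (-c) < 0 := max_lt hlt (by linarith)
        linarith
    obtain ⟨m, hm⟩ := hsub t (hicc htmem)
    have htneg : t < 0 := by
      have h1 : max x (-c) < 0 := max_lt hlt (by linarith)
      linarith
    have hm1 : m ≤ -1 := by
      by_contra hm1
      push_neg at hm1
      have : (0:ℤ) ≤ m := by omega
      have : (0:ℝ) ≤ m * c := mul_nonneg (by exact_mod_cast this) hc.le
      linarith [hm ▸ this]
    have : t ≤ -c := by
      rw [hm]
      have : (m:ℝ) ≤ -1 := by exact_mod_cast hm1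
      nlinarith
    have : -c ≤ max x (-c) := le_max_right _ _
    linarith
  · exact heq
  · exfalso
    have hicc : Set.Icc 0 x ⊆ A := hA.Icc_subset h0 hx
    set t : ℝ := min x c / 2 with ht
    have htpos : 0 < t := by
      have : 0 < min x c := lt_min hgt hc
      linarith
    have htmem : t ∈ Set.Icc 0 x := by
      constructor
      · linarith
      · have : min x c ≤ x := min_le_left _ _
        linarith
    obtain ⟨m, hm⟩ := hsub t (hicc htmem)
    have hm1 : 1 ≤ m := by
      by_contra hm1
      push_neg at hm1
      have : m ≤ 0 := by omega
      have : (m:ℝ) * c ≤ 0 := mul_nonpos_of_nonpos_of_nonneg (by exact_mod_cast this) hc.le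
      linarith [hm ▸ this]
    have : c ≤ t := by
      rw [hm]
      have : (1:ℝ) ≤ m := by exact_mod_cast hm1
      nlinarith
    have : min x c ≤ c := min_le_right _ _
    linarith

/-- A closed subset of `ℝ^r` stable under integer scalar multiples that is not
discrete at `0` contains a full line. -/
lemma exists_line {r : ℕ} (K : Set (Fin r → ℝ)) (hK : IsClosed K)
    (hz : ∀ (m : ℤ), ∀ x ∈ K, (m : ℝ) • x ∈ K)
    (hnd : ∀ ε : ℝ, 0 < ε → ∃ x ∈ K, x ≠ 0 ∧ ‖x‖ < ε) :
    ∃ u : Fin r → ℝ, ‖u‖ = 1 ∧ ∀ t : ℝ, t • u ∈ K := by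
  have hchoice : ∀ n : ℕ, ∃ x ∈ K, x ≠ 0 ∧ ‖x‖ < 1 / (n + 1) := fun n =>
    hnd (1 / (n + 1)) (by positivity)
  choose x hxK hx0 hxs using hchoice
  have hxn : ∀ n, ‖x n‖ ≠ 0 := fun n => norm_ne_zero_iff.mpr (hx0 n)
  set u : ℕ → (Fin r → ℝ) := fun n => ‖x n‖⁻¹ • x n with hu
  have hus : ∀ n, u n ∈ Metric.sphere (0 : Fin r → ℝ) 1 := by
    intro n
    simp only [Metric.mem_sphere, dist_zero_right, hu, norm_smul, norm_inv, norm_norm]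
    exact inv_mul_cancel₀ (hxn n)
  obtain ⟨v, hv, ψ, hψ, hlim⟩ := (isCompact_sphere (0 : Fin r → ℝ) 1).tendsto_subseq hus
  have hvnorm : ‖v‖ = 1 := by simpa using hv
  refine ⟨v, hvnorm, fun t => ?_⟩
  -- the norms tend to zero
  have hnorm0 : Tendsto (fun n => ‖x (ψ n)‖) atTop (𝓝 0) := by
    have hle : ∀ n, ‖x (ψ n)‖ ≤ 1 / (n + 1) := by
      intro n
      have h1 : ‖x (ψ n)‖ < 1 / (ψ n + 1) := hxs (ψ n)
      have h2 : (1 : ℝ) / (ψ n + 1) ≤ 1 / (n + 1) := by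
        apply one_div_le_one_div_of_le (by positivity)
        have h3 : n ≤ ψ n := hψ.le_apply
        have h4 : (n:ℝ) ≤ (ψ n : ℝ) := by exact_mod_cast h3
        linarith
      linarith
    have h0le : ∀ n, (0:ℝ) ≤ ‖x (ψ n)‖ := fun n => norm_nonneg _
    exact tendsto_of_tendsto_of_tendsto_of_le_of_le tendsto_const_nhds
      tendsto_one_div_add_atTop_nhds_zero_nat h0le hle
  -- the scaled floors tend to t
  set c : ℕ → ℤ := fun n => ⌊t / ‖x (ψ n)‖⌋ with hc
  have hct : Tendsto (fun n => (c n : ℝ) * ‖x (ψ n)‖) atTop (𝓝 t) := by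
    have hdist : ∀ n, dist ((c n : ℝ) * ‖x (ψ n)‖) t ≤ ‖x (ψ n)‖ := by
      intro n
      have hs : 0 < ‖x (ψ n)‖ := lt_of_le_of_ne (norm_nonneg _) (Ne.symm (hxn _))
      have h1 : ((c n : ℝ)) * ‖x (ψ n)‖ ≤ t := by
        have := Int.floor_le (t / ‖x (ψ n)‖)
        calc ((c n : ℝ)) * ‖x (ψ n)‖ ≤ (t / ‖x (ψ n)‖) * ‖x (ψ n)‖ :=
              mul_le_mul_of_nonneg_right this hs.le
          _ = t := by field_simp
      have h2 : t < ((c n : ℝ) + 1) * ‖x (ψ n)‖ := by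
        have := Int.lt_floor_add_one (t / ‖x (ψ n)‖)
        calc t = (t / ‖x (ψ n)‖) * ‖x (ψ n)‖ := by field_simp
          _ < ((c n : ℝ) + 1) * ‖x (ψ n)‖ := by
              apply mul_lt_mul_of_pos_right _ hs
              exact_mod_cast this
      rw [Real.dist_eq, abs_le]
      constructor <;> nlinarith
    exact tendsto_iff_dist_tendsto_zero.mpr
      (squeeze_zero (fun n => dist_nonneg) hdist hnorm0)
  have hterm : Tendsto (fun n => ((c n : ℝ) * ‖x (ψ n)‖) • u (ψ n)) atTop (𝓝 (t • v)) :=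
    hct.smul hlim
  have heq : ∀ n, ((c n : ℝ) * ‖x (ψ n)‖) • u (ψ n) = (c n : ℝ) • x (ψ n) := by
    intro n
    rw [hu]
    rw [smul_smul, mul_assoc, mul_inv_cancel₀ (hxn _), mul_one]
  have hmem : ∀ n, ((c n : ℝ) * ‖x (ψ n)‖) • u (ψ n) ∈ K := by
    intro n
    rw [heq n]
    exact hz (c n) _ (hxK (ψ n))
  exact hK.mem_of_tendsto hterm (Eventually.of_forall hmem)

/-- Easy direction at the level of integer functionals. -/
lemma easy_dir {r : ℕ} (S : Set (Fin r → ℝ)) (b : Fin r → ℤ) (n : ℕ) (hn : 0 < n)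
    (hv : ∀ v ∈ S, ∃ m : ℤ, phiL b v = m / n) :
    ∀ w ∈ Lfrak S, phiL b w = 0 := by
  set φ := phiL b with hφdef
  have hφc : Continuous φ := φ.continuous_of_finiteDimensional
  have hn0 : ((n : ℝ)) ≠ 0 := by positivity
  set Z : Set ℝ := {y : ℝ | ∃ m : ℤ, y = m * (1 / n)} with hZ
  have hZclosed : IsClosed Z := by
    have h2 : Z = {x : ℝ | ∃ m : ℤ, x = 0 + m * (1 / n)} := by
      ext x
      constructor
      · rintro ⟨m, hm⟩; exact ⟨m, by rw [hm]; ring⟩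
      · rintro ⟨m, hm⟩; exact ⟨m, by rw [hm]; ring⟩
    rw [h2]
    exact isClosed_coset 0 (1 / n) (by positivity)
  set H : Set (Fin r → ℝ) := φ ⁻¹' Z with hH
  have hHclosed : IsClosed H := hZclosed.preimage hφc
  -- H contains the generated subgroup
  set Hgrp : AddSubgroup (Fin r → ℝ) :=
    AddSubgroup.comap φ.toAddMonoidHom (AddSubgroup.zmultiples ((1 : ℝ) / n)) with hHgrp
  have hHgrpH : (Hgrp : Set (Fin r → ℝ)) = H := by
    ext x
    simp only [hHgrp, AddSubgroup.coe_comap, Set.mem_preimage, SetLike.mem_coe,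
      AddSubgroup.mem_zmultiples_iff, hH, hZ, Set.mem_setOf_eq, LinearMap.toAddMonoidHom_coe]
    constructor
    · rintro ⟨k, hk⟩; exact ⟨k, by rw [← hk]; simp [zsmul_eq_mul]⟩
    · rintro ⟨k, hk⟩; exact ⟨k, by rw [hk]; simp [zsmul_eq_mul]⟩
  have hgen : S ∪ intVecs r ⊆ (Hgrp : Set (Fin r → ℝ)) := by
    rintro x (hx | ⟨m0, rfl⟩)
    · obtain ⟨m, hm⟩ := hv x hx
      rw [hHgrpH]
      exact ⟨m, by rw [hm]; rw [mul_one_div]⟩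
    · rw [hHgrpH]
      refine ⟨(∑ i, b i * m0 i) * n, ?_⟩
      have hval : φ (fun i => ((m0 i : ℝ))) = ((∑ i, b i * m0 i : ℤ) : ℝ) := by
        rw [hφdef, phiL_apply]; push_cast; ring
      rw [hval]
      push_cast
      field_simp
  have hGH : (AddSubgroup.closure (S ∪ intVecs r) : Set (Fin r → ℝ)) ⊆ H := by
    rw [← hHgrpH]
    exact_mod_cast SetLike.coe_subset_coe.mpr ((AddSubgroup.closure_le Hgrp).mpr hgen)
  have hKH : closure ((AddSubgroup.closure (S ∪ intVecs r) : AddSubgroup (Fin r → ℝ)) :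
      Set (Fin r → ℝ)) ⊆ H := closure_minimal hGH hHclosed
  -- the image of Lfrak S is preconnected, contains 0, and sits inside a discrete set
  have hLsub : Lfrak S ⊆ H := (connectedComponentIn_subset _ _).trans hKH
  have h0L : (0 : Fin r → ℝ) ∈ Lfrak S := by
    apply mem_connectedComponentIn
    exact subset_closure (AddSubgroup.zero_mem _)
  have hpre : IsPreconnected (φ '' Lfrak S) :=
    (isPreconnected_connectedComponentIn).image φ hφc.continuousOn
  have h0m : (0 : ℝ) ∈ φ '' Lfrak S := ⟨0, h0L, map_zero φ⟩
  have hsub : ∀ x ∈ φ '' Lfrak S, ∃ m : ℤ, x = m * (1 / n) := by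
    rintro x ⟨w, hw, rfl⟩
    exact hLsub hw
  intro w hw
  exact preconnected_in_discrete (by positivity) hpre h0m hsub (φ w) ⟨w, hw, rfl⟩

/-- The subspace of directions of lines inside an additive subgroup `K`. -/
def lineSub {r : ℕ} (K : AddSubgroup (Fin r → ℝ)) : Submodule ℝ (Fin r → ℝ) where
  carrier := {u | ∀ t : ℝ, t • u ∈ K}
  add_mem' := fun hu hv t => by simpa [smul_add] using K.add_mem (hu t) (hv t)
  zero_mem' := fun t => by simpa using K.zero_mem
  smul_mem' := fun c u hu t => by simpa [smul_smul] using hu (t * c)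

lemma mem_lineSub {r : ℕ} (K : AddSubgroup (Fin r → ℝ)) (u : Fin r → ℝ) :
    u ∈ lineSub K ↔ ∀ t : ℝ, t • u ∈ K := Iff.rfl

set_option maxHeartbeats 1000000 in
/-- Hard direction at the level of integer functionals. -/
lemma hard_dir {r : ℕ} (S : Set (Fin r → ℝ)) (b : Fin r → ℤ)
    (h : ∀ w ∈ Lfrak S, phiL b w = 0) :
    ∃ n : ℕ, 0 < n ∧ ∀ v ∈ S, ∃ m : ℤ, phiL b v = m / n := by
  classical
  set φ := phiL b with hφdef
  have hφc : Continuous φ := φ.continuous_of_finiteDimensional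
  set G : AddSubgroup (Fin r → ℝ) := AddSubgroup.closure (S ∪ intVecs r) with hG
  set Kgrp : AddSubgroup (Fin r → ℝ) := G.topologicalClosure with hKgrp
  have hKcoe : (Kgrp : Set (Fin r → ℝ)) = closure (G : Set (Fin r → ℝ)) :=
    AddSubgroup.topologicalClosure_coe
  have hL : Lfrak S = connectedComponentIn (Kgrp : Set (Fin r → ℝ)) 0 := by
    rw [Lfrak, hKcoe]
  have hKclosed : IsClosed (Kgrp : Set (Fin r → ℝ)) := by rw [hKcoe]; exact isClosed_closure
  have hGK : G ≤ Kgrp := AddSubgroup.le_topologicalClosure G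
  have hSK : ∀ v ∈ S, v ∈ Kgrp := fun v hv => hGK (AddSubgroup.subset_closure (Or.inl hv))
  have hZK : ∀ x ∈ intVecs r, x ∈ Kgrp := fun x hx =>
    hGK (AddSubgroup.subset_closure (Or.inr hx))
  have hφint : ∀ m : Fin r → ℤ, φ (fun i => ((m i : ℝ))) = ((∑ i, b i * m i : ℤ) : ℝ) := by
    intro m; rw [hφdef, phiL_apply]; push_cast; ring
  -- the subspace of directions of lines inside K
  set V : Submodule ℝ (Fin r → ℝ) := lineSub Kgrp with hV
  have hVmem : ∀ u, u ∈ V ↔ ∀ t : ℝ, t • u ∈ Kgrp := fun u => mem_lineSub Kgrp u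
  have hVK : ∀ u ∈ V, u ∈ Kgrp := fun u hu => (one_smul ℝ u) ▸ ((hVmem u).mp hu 1)
  have hVL : ∀ u ∈ V, u ∈ Lfrak S := by
    intro u hu
    rw [hL]
    have hcont : Continuous (fun t : ℝ => t • u) := continuous_id.smul continuous_const
    have hpre : IsPreconnected (Set.range fun t : ℝ => t • u) := by
      rw [← Set.image_univ]
      exact isPreconnected_univ.image _ hcont.continuousOn
    have hsub : (Set.range fun t : ℝ => t • u) ⊆ (Kgrp : Set (Fin r → ℝ)) := by
      rintro _ ⟨t, rfl⟩; exact (hVmem u).mp hu t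
    have h0 : (0 : Fin r → ℝ) ∈ Set.range fun t : ℝ => t • u := ⟨0, by simp⟩
    exact (hpre.subset_connectedComponentIn h0 hsub) ⟨1, one_smul _ _⟩
  have hφV : ∀ u ∈ V, φ u = 0 := fun u hu => h u (hVL u hu)
  obtain ⟨W, hW⟩ := Submodule.exists_isCompl V
  set p : (Fin r → ℝ) →ₗ[ℝ] (Fin r → ℝ) := V.subtype ∘ₗ V.linearProjOfIsCompl W hW with hp
  have hpV : ∀ x, p x ∈ V := fun x => (V.linearProjOfIsCompl W hW x).2
  have hqW : ∀ x, x - p x ∈ W := by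
    intro x
    have h1 : ((V.linearProjOfIsCompl W hW x : Fin r → ℝ)) + (W.linearProjOfIsCompl V hW.symm x : Fin r → ℝ) = x :=
      Submodule.projection_add_projection_eq_self hW x
    have h2 : x - p x = ((W.linearProjOfIsCompl V hW.symm x : Fin r → ℝ)) := by
      have hpx : p x = ((V.linearProjOfIsCompl W hW x : Fin r → ℝ)) := rfl
      rw [hpx]
      exact sub_eq_of_eq_add' h1.symm
    rw [h2]
    exact (W.linearProjOfIsCompl V hW.symm x).2
  set P := LinearMap.toContinuousLinearMap p with hPdef
  have hPx : ∀ x, P x = p x := fun _ => rfl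
  set Kp : Set (Fin r → ℝ) := (Kgrp : Set (Fin r → ℝ)) ∩ (W : Set (Fin r → ℝ)) with hKp
  have hKpc : IsClosed Kp := hKclosed.inter (Submodule.closed_of_finiteDimensional W)
  have hKpz : ∀ (m : ℤ), ∀ x ∈ Kp, (m : ℝ) • x ∈ Kp := by
    rintro m x ⟨h1, h2⟩
    constructor
    · have := Kgrp.zsmul_mem h1 m
      rwa [← Int.cast_smul_eq_zsmul ℝ m x] at this
    · exact W.smul_mem _ h2
  have hKpsub : ∀ x ∈ Kp, ∀ y ∈ Kp, x - y ∈ Kp := by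
    rintro x ⟨h1, h2⟩ y ⟨h3, h4⟩
    exact ⟨Kgrp.sub_mem h1 h3, W.sub_mem h2 h4⟩
  -- K ∩ W is discrete
  have hdisc : ∃ ε : ℝ, 0 < ε ∧ ∀ x ∈ Kp, ‖x‖ < ε → x = 0 := by
    by_contra hcon
    push_neg at hcon
    obtain ⟨u, hu1, hul⟩ := exists_line Kp hKpc hKpz (fun ε hε => by
      obtain ⟨x, hx1, hx2, hx3⟩ := hcon ε hε
      exact ⟨x, hx1, hx3, hx2⟩)
    have huV : u ∈ V := (hVmem u).mpr (fun t => (hul t).1)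
    have huW : u ∈ W := by
      have := (hul 1).2
      simpa using this
    have : u = 0 := (Submodule.disjoint_def.mp hW.disjoint) u huV huW
    rw [this] at hu1
    simp at hu1
  obtain ⟨ε, hε, hsep⟩ := hdisc
  -- the relevant finite set
  set R : ℝ := 1 + ‖P‖ with hR
  set F : Set (Fin r → ℝ) := Kp ∩ Metric.closedBall 0 R with hF
  have hFfin : F.Finite := by
    rw [Set.not_infinite.symm]
    intro hinf
    obtain ⟨x0, _, hacc⟩ := hinf.exists_accPt_of_subset_isCompact
      (isCompact_closedBall (0 : Fin r → ℝ) R) Set.inter_subset_right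
    rw [accPt_iff_nhds] at hacc
    obtain ⟨y, ⟨hyU, hyF⟩, hyx⟩ :=
      hacc (Metric.ball x0 (ε / 2)) (Metric.ball_mem_nhds _ (by positivity))
    have hdyx : 0 < dist y x0 := dist_pos.mpr hyx
    obtain ⟨z, ⟨hzU, hzF⟩, hzx⟩ := hacc (Metric.ball x0 (min (ε / 2) (dist y x0)))
      (Metric.ball_mem_nhds _ (lt_min (by positivity) hdyx))
    have hzy : z ≠ y := by
      intro hzy
      have h1 := Metric.mem_ball.mp hzU
      rw [hzy] at h1
      have h2 : min (ε / 2) (dist y x0) ≤ dist y x0 := min_le_right _ _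
      linarith
    have hw : y - z ∈ Kp := hKpsub y hyF.1 z hzF.1
    have hnorm : ‖y - z‖ < ε := by
      have h1 : dist y x0 < ε / 2 := Metric.mem_ball.mp hyU
      have h2 : dist z x0 < ε / 2 :=
        lt_of_lt_of_le (Metric.mem_ball.mp hzU) (min_le_left _ _)
      calc ‖y - z‖ = dist y z := (dist_eq_norm y z).symm
        _ ≤ dist y x0 + dist z x0 := dist_triangle_right y z x0
        _ < ε := by linarith
    have := hsep _ hw hnorm
    rw [sub_eq_zero] at this
    exact hzy (this.symm)
  -- every element of K has the same φ-value as an element of F modulo ℤ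
  have hKF : ∀ k ∈ Kgrp, ∃ f ∈ F, ∃ m : ℤ, φ k = φ f + m := by
    intro k hk
    set mv : Fin r → ℤ := fun i => ⌊k i⌋ with hmv
    set km : Fin r → ℝ := fun i => ((mv i : ℝ)) with hkm
    have hkmK : km ∈ Kgrp := hZK km ⟨mv, rfl⟩
    set kk : Fin r → ℝ := k - km with hkk
    have hkkK : kk ∈ Kgrp := Kgrp.sub_mem hk hkmK
    have hkknorm : ‖kk‖ ≤ 1 := by
      rw [pi_norm_le_iff_of_nonneg zero_le_one]
      intro i
      have h1 : (⌊k i⌋ : ℝ) ≤ k i := Int.floor_le _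
      have h2 : k i < ⌊k i⌋ + 1 := Int.lt_floor_add_one _
      rw [hkk]
      simp only [Pi.sub_apply, hkm, hmv]
      rw [Real.norm_eq_abs, abs_le]
      constructor <;> linarith
    set w : Fin r → ℝ := kk - p kk with hwdef
    have hwK : w ∈ Kgrp := Kgrp.sub_mem hkkK (hVK _ (hpV kk))
    have hwW : w ∈ W := hqW kk
    have hwnorm : ‖w‖ ≤ R := by
      have hop := P.le_opNorm kk
      rw [hPx] at hop
      have hPn : 0 ≤ ‖P‖ := norm_nonneg _
      calc ‖w‖ ≤ ‖kk‖ + ‖p kk‖ := norm_sub_le _ _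
        _ ≤ 1 + ‖P‖ * ‖kk‖ := by linarith
        _ ≤ 1 + ‖P‖ := by nlinarith
    refine ⟨w, ⟨⟨hwK, hwW⟩, Metric.mem_closedBall.mpr (by
      rw [dist_zero_right]; exact hwnorm)⟩, ∑ i, b i * mv i, ?_⟩
    have e1 : φ k = φ km + φ kk := by
      have e0 : φ kk = φ k - φ km := by rw [hkk, map_sub]
      linarith
    have e2 : φ kk = φ w + φ (p kk) := by
      have e0 : φ w = φ kk - φ (p kk) := by rw [hwdef, map_sub]
      linarith
    rw [e1, e2, hφV _ (hpV kk), add_zero]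
    have e3 : φ km = ((∑ i, b i * mv i : ℤ) : ℝ) := hφint mv
    rw [e3]; ring
  -- the subgroup of values
  set B : AddSubgroup ℝ :=
    (Kgrp.map φ.toAddMonoidHom) ⊔ AddSubgroup.zmultiples (1 : ℝ) with hB
  rcases B.dense_or_cyclic with hdense | ⟨c, hc⟩
  · exfalso
    set T : Set ℝ := ⋃ f ∈ F, {x : ℝ | ∃ m : ℤ, x = φ f + m * 1} with hT
    have hTclosed : IsClosed T :=
      hFfin.isClosed_biUnion (fun f _ => isClosed_coset _ 1 one_ne_zero)
    have hBT : (B : Set ℝ) ⊆ T := by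
      intro x hx
      rw [SetLike.mem_coe, hB, AddSubgroup.mem_sup] at hx
      obtain ⟨y, hy, z, hz, rfl⟩ := hx
      obtain ⟨k, hk, rfl⟩ := AddSubgroup.mem_map.mp hy
      obtain ⟨m, hm⟩ := AddSubgroup.mem_zmultiples_iff.mp hz
      obtain ⟨f, hf, m', hm'⟩ := hKF k hk
      apply Set.mem_biUnion hf
      refine ⟨m' + m, ?_⟩
      have hcoe : φ.toAddMonoidHom k = φ k := rfl
      rw [← hm, hcoe, hm']
      simp only [zsmul_eq_mul, mul_one]
      push_cast
      ring
    have hTuniv : T = Set.univ := by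
      apply Set.eq_univ_of_univ_subset
      calc (Set.univ : Set ℝ) = closure (B : Set ℝ) := hdense.closure_eq.symm
        _ ⊆ closure T := closure_mono hBT
        _ = T := hTclosed.closure_eq
    have hTcount : T.Countable := by
      apply hFfin.countable.biUnion
      intro f _
      have : {x : ℝ | ∃ m : ℤ, x = φ f + m * 1} = Set.range (fun m : ℤ => φ f + m * 1) := by
        ext x; simp [eq_comm]
      rw [this]
      exact Set.countable_range _
    rw [hTuniv] at hTcount
    exact Cardinal.not_countable_real hTcount
  · rw [← AddSubgroup.zmultiples_eq_closure] at hc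
    have h1B : (1 : ℝ) ∈ B :=
      AddSubgroup.mem_sup_right (AddSubgroup.mem_zmultiples 1)
    rw [hc] at h1B
    obtain ⟨m1, hm1⟩ := AddSubgroup.mem_zmultiples_iff.mp h1B
    have hm1' : (m1 : ℝ) * c = 1 := by rw [← hm1]; simp [zsmul_eq_mul]
    have hm1ne : m1 ≠ 0 := by
      rintro rfl
      simp at hm1'
    refine ⟨m1.natAbs, Int.natAbs_pos.mpr hm1ne, ?_⟩
    intro v hv
    have hvB : φ v ∈ B :=
      AddSubgroup.mem_sup_left (AddSubgroup.mem_map_of_mem _ (hSK v hv))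
    rw [hc] at hvB
    obtain ⟨m2, hm2⟩ := AddSubgroup.mem_zmultiples_iff.mp hvB
    have hm2' : φ v = (m2 : ℝ) * c := by rw [← hm2]; simp [zsmul_eq_mul]
    have hm1R : ((m1 : ℝ)) ≠ 0 := by exact_mod_cast hm1ne
    have hcval : c = 1 / (m1 : ℝ) := by field_simp; linarith [hm1']
    rcases Int.natAbs_eq m1 with habs | habs
    · refine ⟨m2, ?_⟩
      rw [hm2', hcval]
      have h6 : ((m1.natAbs : ℤ)) = m1 := habs.symm
      have hnat : ((m1.natAbs : ℕ) : ℝ) = (m1 : ℝ) := by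
        calc ((m1.natAbs : ℕ) : ℝ) = ((m1.natAbs : ℤ) : ℝ) := (Int.cast_natCast m1.natAbs).symm
          _ = (m1 : ℝ) := by rw [h6]
      rw [hnat]
      ring
    · refine ⟨-m2, ?_⟩
      rw [hm2', hcval]
      have hnat : ((m1.natAbs : ℕ) : ℝ) = -(m1 : ℝ) := by
        have h6 : ((m1.natAbs : ℤ)) = -m1 := by omega
        calc ((m1.natAbs : ℕ) : ℝ) = ((m1.natAbs : ℤ) : ℝ) := (Int.cast_natCast m1.natAbs).symm
          _ = -(m1 : ℝ) := by rw [h6]; push_cast; ring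
      rw [hnat]
      push_cast
      field_simp

/-- A rational vector `a` is orthogonal to `𝔏(S)` if and only if all the scalar
products `a · v`, `v ∈ S`, lie in `n⁻¹ ℤ` for some positive integer `n`. -/
theorem orthogonal_Lfrak_iff (r : ℕ) (S : Set (Fin r → ℝ)) (hS : S.Nonempty)
    (a : Fin r → ℚ) :
    (∀ w ∈ Lfrak S, (∑ i, (a i : ℝ) * w i) = 0) ↔
      (∃ n : ℕ, 0 < n ∧ ∀ v ∈ S, ∃ m : ℤ, (∑ i, (a i : ℝ) * v i) = (m : ℝ) / (n : ℝ)) := by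
  classical
  set d : ℕ := ∏ i, (a i).den with hd
  have hdpos : 0 < d := Finset.prod_pos (fun i _ => (a i).pos)
  have hdR : (0:ℝ) < (d:ℝ) := by exact_mod_cast hdpos
  have hbex : ∀ i : Fin r, ∃ bi : ℤ, (a i) * (d:ℚ) = (bi:ℚ) := by
    intro i
    obtain ⟨c, hc⟩ := Finset.dvd_prod_of_mem (fun j => (a j).den) (Finset.mem_univ i)
    refine ⟨(a i).num * c, ?_⟩
    rw [hd] at *
    rw [hc]
    push_cast
    rw [← mul_assoc, Rat.mul_den_eq_num]
  choose b hb using hbex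
  have hbR : ∀ i, ((b i : ℝ)) = (a i : ℝ) * (d:ℝ) := by
    intro i
    have h2 : (((a i) * (d:ℚ) : ℚ) : ℝ) = ((b i : ℚ) : ℝ) := by rw [hb i]
    push_cast at h2
    linarith
  have hkey : ∀ x : Fin r → ℝ, phiL b x = (d:ℝ) * ∑ i, (a i : ℝ) * x i := by
    intro x
    rw [phiL_apply, Finset.mul_sum]
    apply Finset.sum_congr rfl
    intro i _
    rw [hbR i]
    ring
  constructor
  · intro hL
    have h' : ∀ w ∈ Lfrak S, phiL b w = 0 := by
      intro w hw
      rw [hkey, hL w hw]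
      ring
    obtain ⟨n, hn, hvv⟩ := hard_dir S b h'
    have hnR : (0:ℝ) < (n:ℝ) := by exact_mod_cast hn
    refine ⟨n * d, Nat.mul_pos hn hdpos, fun v hv => ?_⟩
    obtain ⟨m, hm⟩ := hvv v hv
    refine ⟨m, ?_⟩
    rw [hkey] at hm
    have hm2 : (d:ℝ) * (∑ i, (a i : ℝ) * v i) * (n:ℝ) = m := by
      rw [eq_div_iff (by positivity)] at hm
      linarith
    push_cast
    rw [eq_div_iff (by positivity)]
    linear_combination hm2
  · rintro ⟨n, hn, hvv⟩
    have hnR : (0:ℝ) < (n:ℝ) := by exact_mod_cast hn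
    have h' : ∀ v ∈ S, ∃ m : ℤ, phiL b v = m / n := by
      intro v hv
      obtain ⟨m, hm⟩ := hvv v hv
      refine ⟨m * d, ?_⟩
      rw [hkey, hm]
      push_cast
      field_simp
    have h2 := easy_dir S b n hn h'
    intro w hw
    have h3 := h2 w hw
    rw [hkey] at h3
    have := mul_eq_zero.mp h3
    rcases this with h4 | h4
    · exact absurd h4 (by positivity)
    · exact h4
end

section
/- Let u = (u_1,...,u_r) ∈ R_{>0}^r and u' = (u_1',...,u_{r'}') ∈ R_{>0}^{r'} have the same set of coordinates, i.e. {u_1,...,u_r} = {u_1',...,u_{r'}'} as sets. Then u is admissible if and only if u' is admissible. -/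
/-- The coordinatewise inverse `ũ` of a vector `u`. -/
noncomputable def tildeVec {r : ℕ} (u : Fin r → ℝ) : Fin r → ℝ := fun i => (u i)⁻¹

/-- A vector `u ∈ ℝ_{>0}^r` is admissible if `u_i ũ ∈ 𝔏({u_i ũ}) + ℤ^r` for every `i`. -/
def AdmissibleVec {r : ℕ} (u : Fin r → ℝ) : Prop :=
  ∀ i : Fin r, ∃ w ∈ Lfrak {u i • tildeVec u}, ∃ m ∈ intVecs r,
    u i • tildeVec u = w + m

/-- Precomposition with `g` as an additive monoid hom on real vectors. -/
def precompHom {r r' : ℕ} (g : Fin r → Fin r') : (Fin r' → ℝ) →+ (Fin r → ℝ) where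
  toFun w := fun j => w (g j)
  map_zero' := rfl
  map_add' _ _ := rfl

lemma precomp_continuous {r r' : ℕ} (g : Fin r → Fin r') :
    Continuous (precompHom g) := by
  exact continuous_pi fun j => continuous_apply (g j)

lemma precomp_intVecs {r r' : ℕ} (g : Fin r → Fin r') {m : Fin r' → ℝ}
    (hm : m ∈ intVecs r') : precompHom g m ∈ intVecs r := by
  obtain ⟨m₀, rfl⟩ := hm
  exact ⟨fun j => m₀ (g j), rfl⟩

/-- Precomposition maps `𝔏(S')` into `𝔏(S)` provided it maps `S'` into
`⟨S ∪ ℤ^r⟩`-stuff; we only need the singleton case. -/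
lemma precomp_Lfrak {r r' : ℕ} (g : Fin r → Fin r') (v' : Fin r' → ℝ) (v : Fin r → ℝ)
    (hv : precompHom g v' = v) {w : Fin r' → ℝ} (hw : w ∈ Lfrak {v'}) :
    precompHom g w ∈ Lfrak {v} := by
  set T := precompHom g
  set G' : AddSubgroup (Fin r' → ℝ) := AddSubgroup.closure ({v'} ∪ intVecs r')
  set G : AddSubgroup (Fin r → ℝ) := AddSubgroup.closure ({v} ∪ intVecs r)
  have hmap : ∀ x ∈ (G' : Set (Fin r' → ℝ)), T x ∈ (G : Set (Fin r → ℝ)) := by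
    intro x hx
    have : T x ∈ G'.map T := AddSubgroup.mem_map_of_mem T hx
    rw [AddMonoidHom.map_closure] at this
    refine AddSubgroup.closure_mono ?_ this
    rintro y ⟨z, hz, rfl⟩
    rcases hz with hz | hz
    · left; simp only [Set.mem_singleton_iff] at hz; subst hz
      simp [hv]
    · right; exact precomp_intVecs g hz
  have hclos : T '' closure (G' : Set (Fin r' → ℝ)) ⊆ closure (G : Set (Fin r → ℝ)) := by
    refine (Set.image_subset_iff.mpr ?_)
    refine (closure_minimal ?_ (isClosed_closure.preimage (precomp_continuous g)))
    intro x hx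
    exact subset_closure (hmap x hx)
  have h0 : (0 : Fin r' → ℝ) ∈ closure (G' : Set (Fin r' → ℝ)) :=
    subset_closure G'.zero_mem
  have himg := (precomp_continuous g).image_connectedComponentIn_subset (s := closure (G' : Set (Fin r' → ℝ))) h0
  have hw' : T w ∈ T '' connectedComponentIn (closure (G' : Set (Fin r' → ℝ))) 0 :=
    Set.mem_image_of_mem _ hw
  have hT0 : T (0 : Fin r' → ℝ) = 0 := map_zero T
  have := himg hw'
  rw [hT0] at this
  -- `this : T w ∈ connectedComponentIn (T '' closure G') 0`
  exact connectedComponentIn_mono 0 hclos this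

lemma adm_of_subset {r r' : ℕ} (u : Fin r → ℝ) (u' : Fin r' → ℝ)
    (h1 : Set.range u ⊆ Set.range u') (H : AdmissibleVec u') : AdmissibleVec u := by
  intro i
  -- choose g with u' (g j) = u j
  have hg : ∀ j : Fin r, ∃ k : Fin r', u' k = u j := fun j => h1 ⟨j, rfl⟩
  choose g hgspec using hg
  set T := precompHom g
  have hTv : T (u' (g i) • tildeVec u') = u i • tildeVec u := by
    funext j
    show u' (g i) * (u' (g j))⁻¹ = u i * (u j)⁻¹
    rw [hgspec, hgspec]
  obtain ⟨w, hw, m, hm, heq⟩ := H (g i)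
  refine ⟨T w, ?_, T m, precomp_intVecs g hm, ?_⟩
  · exact precomp_Lfrak g _ _ hTv hw
  · rw [← hTv, heq, map_add]

/-- If two positive vectors have the same set of coordinates, then one is admissible
if and only if the other is. -/
theorem admissible_iff_of_same_coords (r r' : ℕ) (u : Fin r → ℝ) (u' : Fin r' → ℝ)
    (hu : ∀ i, 0 < u i) (hu' : ∀ i, 0 < u' i)
    (h : Set.range u = Set.range u') :
    AdmissibleVec u ↔ AdmissibleVec u' := by
  constructor
  · exact adm_of_subset u' u h.ge
  · exact adm_of_subset u u' h.le
end
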